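/- arXiv:2208.09806 — 6 statements merged into one kernel-verified Lean document; each statement's English description precedes it below -/
import Mathlib

section
/- Let f : ℕ → ℂ be an arithmetic function and suppose there exist constants C > 0 and α ∈ (0,1) such that |S(x,t)| ≤ C·x^α for all real x ≥ 1 and all t ∈ ℝ. Then the series F(t) = Σ_{n=1}^∞ f(n)e^{2πint}/n converges for every t ∈ ℝ, and F is Hölder continuous with exponent 1−α: there exists a constant C₁ > 0 such that |F(s) − F(t)| ≤ C₁·|s−t|^{1−α} for all s, t ∈ ℝ. Moreover, the same Hölder estimate (with the same exponent 1−α) holds for the real-valued functions t ↦ |F(t)|, t ↦ Re F(t), and t ↦ Im F(t). -/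
/-!
By Abel summation, `F_N(t) = ∑_{n ≤ N} f(n) e(nt) / n = S_N(t) / N + ∑_{n < N} S_n(t) / (n(n+1))`,
so `|S_N| ≤ C N^α` makes `F_N` converge uniformly, with `|F - F_N| ≪ N^(α-1)`. On the other hand
`F_N' = 2πi S_N`, so `|F_N(s) - F_N(t)| ≪ N^α |s - t|`. Choosing `N ≈ 1 / |s - t|` balances the
two errors at `|s - t|^(1-α)`.
-/

open Filter Finset Topology

lemma rpow_div_mul_add_one_le {x α : ℝ} (hx : 0 < x) (hα0 : 0 ≤ α) (hα1 : α < 1) :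
    x ^ α / (x * (x + 1)) ≤ (x ^ (α - 1) - (x + 1) ^ (α - 1)) / (1 - α) := by
  have hx1 : 0 < x + 1 := by linarith
  have hu : 0 < x ^ (α - 1) := Real.rpow_pos_of_pos hx _
  -- Bernoulli's inequality for the concave power `y ↦ y ^ (1 - α)` at `y = x / (x + 1)`
  have hbern := rpow_one_add_le_one_add_mul_self (s := -1 / (x + 1))
    (by rw [neg_div, neg_le_neg_iff, div_le_one hx1]; linarith) (p := 1 - α) (by linarith)
    (by linarith)
  have hratio : (1 + -1 / (x + 1)) ^ (1 - α) = (x + 1) ^ (α - 1) / x ^ (α - 1) := by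
    rw [show 1 + -1 / (x + 1) = x / (x + 1) by field_simp; ring,
      Real.div_rpow hx.le hx1.le, show 1 - α = -(α - 1) by ring,
      Real.rpow_neg hx.le, Real.rpow_neg hx1.le, inv_div_inv]
  rw [hratio, div_le_iff₀ hu] at hbern
  have hxα : x ^ α = x * x ^ (α - 1) := by rw [Real.rpow_sub_one hx.ne']; field_simp
  rw [hxα, mul_div_mul_left _ _ hx.ne', le_div_iff₀ (by linarith), div_mul_eq_mul_div,
    div_le_iff₀ hx1]
  have hcoef : (1 + (1 - α) * (-1 / (x + 1))) * (x + 1) = x + α := by field_simp; ring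
  nlinarith [mul_le_mul_of_nonneg_right hbern hx1.le]

section AbelSummation

variable {𝕜 : Type*} [RCLike 𝕜] {C α : ℝ}

noncomputable def abelRemainder (a : ℕ → 𝕜) (N : ℕ) : 𝕜 :=
  ∑ n ∈ Icc 1 N, a n / n - (∑ n ∈ Icc 1 N, a n) / N

lemma abelRemainder_succ_sub (a : ℕ → 𝕜) (M : ℕ) :
    abelRemainder a (M + 1) - abelRemainder a M =
      (∑ n ∈ Icc 1 M, a n) / ((M * (M + 1) : ℕ) : 𝕜) := by
  rcases Nat.eq_zero_or_pos M with rfl | hM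
  · simp [abelRemainder]
  · have hM0 : (M : 𝕜) ≠ 0 := by exact_mod_cast hM.ne'
    simp only [abelRemainder, sum_Icc_succ_top (by omega : 1 ≤ M + 1)]
    push_cast
    field_simp
    ring

lemma norm_sum_div_natCast_le {a : ℕ → 𝕜} (hA : ∀ N, 1 ≤ N → ‖∑ n ∈ Icc 1 N, a n‖ ≤ C * N ^ α)
    {N : ℕ} (hN : 1 ≤ N) : ‖(∑ n ∈ Icc 1 N, a n) / N‖ ≤ C * N ^ (α - 1) := by
  have hNpos : (0 : ℝ) < N := by exact_mod_cast hN
  rw [norm_div, RCLike.norm_natCast, Real.rpow_sub_one hNpos.ne', ← mul_div_assoc]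
  exact div_le_div_of_nonneg_right (hA N hN) hNpos.le

lemma norm_abelRemainder_sub_le {a : ℕ → 𝕜} (hα0 : 0 ≤ α) (hα1 : α < 1)
    (hA : ∀ N, 1 ≤ N → ‖∑ n ∈ Icc 1 N, a n‖ ≤ C * N ^ α) {N M : ℕ} (hN : 1 ≤ N) (hNM : N ≤ M) :
    ‖abelRemainder a M - abelRemainder a N‖ ≤ C * (N ^ (α - 1) - M ^ (α - 1)) / (1 - α) := by
  have hC : 0 ≤ C := by simpa using (norm_nonneg _).trans (hA 1 le_rfl)
  induction M, hNM using Nat.le_induction with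
  | base => simp
  | succ M hNM ih =>
    have hM : (0 : ℝ) < M := by exact_mod_cast hN.trans hNM
    calc ‖abelRemainder a (M + 1) - abelRemainder a N‖
        ≤ ‖abelRemainder a (M + 1) - abelRemainder a M‖ + ‖abelRemainder a M - abelRemainder a N‖ :=
          norm_sub_le_norm_sub_add_norm_sub _ _ _
      _ ≤ C * M ^ α / (M * (M + 1)) + C * (N ^ (α - 1) - M ^ (α - 1)) / (1 - α) := by
          rw [abelRemainder_succ_sub, norm_div, RCLike.norm_natCast]
          push_cast
          gcongr
          exact hA M (hN.trans hNM)
      _ ≤ C * (M ^ (α - 1) - (M + 1) ^ (α - 1)) / (1 - α)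
            + C * (N ^ (α - 1) - M ^ (α - 1)) / (1 - α) := by
          simp only [mul_div_assoc]
          gcongr ?_ + _
          exact mul_le_mul_of_nonneg_left (rpow_div_mul_add_one_le hM hα0 hα1) hC
      _ = C * (N ^ (α - 1) - ((M + 1 : ℕ) : ℝ) ^ (α - 1)) / (1 - α) := by
          push_cast
          ring

lemma norm_sum_div_natCast_sub_le {a : ℕ → 𝕜} (hα0 : 0 ≤ α) (hα1 : α < 1)
    (hA : ∀ N, 1 ≤ N → ‖∑ n ∈ Icc 1 N, a n‖ ≤ C * N ^ α) {N M : ℕ} (hN : 1 ≤ N) (hNM : N ≤ M) :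
    ‖∑ n ∈ Icc 1 M, a n / n - ∑ n ∈ Icc 1 N, a n / n‖ ≤ (2 + 1 / (1 - α)) * C * N ^ (α - 1) := by
  have hC : 0 ≤ C := by simpa using (norm_nonneg _).trans (hA 1 le_rfl)
  have hNpos : (0 : ℝ) < N := by exact_mod_cast hN
  have hMN : (M : ℝ) ^ (α - 1) ≤ N ^ (α - 1) :=
    Real.rpow_le_rpow_of_nonpos hNpos (by exact_mod_cast hNM) (by linarith)
  have hsplit : ∑ n ∈ Icc 1 M, a n / n - ∑ n ∈ Icc 1 N, a n / n =
      (abelRemainder a M - abelRemainder a N) + (∑ n ∈ Icc 1 M, a n) / M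
        - (∑ n ∈ Icc 1 N, a n) / N := by
    simp only [abelRemainder]; ring
  rw [hsplit]
  calc _ ≤ ‖abelRemainder a M - abelRemainder a N‖ + ‖(∑ n ∈ Icc 1 M, a n) / M‖
          + ‖(∑ n ∈ Icc 1 N, a n) / N‖ := norm_sub_le_of_le (norm_add_le _ _) le_rfl
    _ ≤ C * (N ^ (α - 1) - M ^ (α - 1)) / (1 - α) + C * M ^ (α - 1) + C * N ^ (α - 1) := by
        gcongr
        · exact norm_abelRemainder_sub_le hα0 hα1 hA hN hNM
        · exact norm_sum_div_natCast_le hA (hN.trans hNM)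
        · exact norm_sum_div_natCast_le hA hN
    _ ≤ (2 + 1 / (1 - α)) * C * N ^ (α - 1) := by
        have h1α : 0 < 1 - α := by linarith
        have : C * (N ^ (α - 1) - M ^ (α - 1)) / (1 - α) ≤ C * N ^ (α - 1) / (1 - α) := by
          gcongr
          exact sub_le_self _ (by positivity)
        have : C * (M : ℝ) ^ (α - 1) ≤ C * N ^ (α - 1) := by gcongr
        rw [add_mul, add_mul, mul_assoc (1 / (1 - α)), one_div_mul_eq_div]
        linarith

lemma cauchySeq_sum_div_natCast {a : ℕ → 𝕜} (hα0 : 0 ≤ α) (hα1 : α < 1)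
    (hA : ∀ N, 1 ≤ N → ‖∑ n ∈ Icc 1 N, a n‖ ≤ C * N ^ α) :
    CauchySeq fun N ↦ ∑ n ∈ Icc 1 N, a n / n := by
  have hdecay : Tendsto (fun N : ℕ ↦ (2 + 1 / (1 - α)) * C * (N : ℝ) ^ (α - 1)) atTop (𝓝 0) := by
    have h := (tendsto_rpow_neg_atTop (by linarith : 0 < 1 - α)).comp tendsto_natCast_atTop_atTop
    simpa [Function.comp_def] using h.const_mul ((2 + 1 / (1 - α)) * C)
  rw [Metric.cauchySeq_iff']
  intro ε hε
  obtain ⟨N, hN, hNε⟩ := ((eventually_ge_atTop 1).and (hdecay.eventually (gt_mem_nhds hε))).exists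
  refine ⟨N, fun M hM ↦ ?_⟩
  rw [dist_eq_norm]
  exact (norm_sum_div_natCast_sub_le hα0 hα1 hA hN hM).trans_lt hNε

lemma norm_sub_sum_div_natCast_le {a : ℕ → 𝕜} {L : 𝕜} (hα0 : 0 ≤ α) (hα1 : α < 1)
    (hA : ∀ N, 1 ≤ N → ‖∑ n ∈ Icc 1 N, a n‖ ≤ C * N ^ α)
    (hL : Tendsto (fun N ↦ ∑ n ∈ Icc 1 N, a n / n) atTop (𝓝 L)) {N : ℕ} (hN : 1 ≤ N) :
    ‖L - ∑ n ∈ Icc 1 N, a n / n‖ ≤ (2 + 1 / (1 - α)) * C * N ^ (α - 1) :=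
  le_of_tendsto (hL.sub_const _).norm <|
    (eventually_ge_atTop N).mono fun _ hM ↦ norm_sum_div_natCast_sub_le hα0 hα1 hA hN hM

end AbelSummation

lemma exists_nat_rpow_le {δ α : ℝ} (hδ0 : 0 < δ) (hδ1 : δ < 1) (hα0 : 0 ≤ α) (hα1 : α ≤ 1) :
    ∃ N : ℕ, 1 ≤ N ∧ (N : ℝ) ^ (α - 1) ≤ 2 * δ ^ (1 - α) ∧ (N : ℝ) ^ α * δ ≤ δ ^ (1 - α) := by
  have hδinv : 1 ≤ δ⁻¹ := one_le_inv_iff₀.mpr ⟨hδ0, hδ1.le⟩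
  refine ⟨⌊δ⁻¹⌋₊, Nat.le_floor (by exact_mod_cast hδinv), ?_, ?_⟩
  · have hlow : (2 * δ)⁻¹ ≤ ⌊δ⁻¹⌋₊ := by
      have h := Nat.lt_floor_add_one δ⁻¹
      have h1 : (1 : ℝ) ≤ ⌊δ⁻¹⌋₊ := by exact_mod_cast Nat.le_floor (by exact_mod_cast hδinv)
      rw [mul_inv]
      linarith
    calc ((⌊δ⁻¹⌋₊ : ℕ) : ℝ) ^ (α - 1) ≤ ((2 * δ)⁻¹) ^ (α - 1) :=
          Real.rpow_le_rpow_of_nonpos (by positivity) hlow (by linarith)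
      _ = 2 ^ (1 - α) * δ ^ (1 - α) := by
          rw [Real.inv_rpow (by positivity), ← Real.rpow_neg (by positivity), neg_sub,
            Real.mul_rpow (by norm_num) hδ0.le]
      _ ≤ 2 * δ ^ (1 - α) := by
          gcongr
          exact Real.rpow_le_self_of_one_le (by norm_num) (by linarith)
  · calc ((⌊δ⁻¹⌋₊ : ℕ) : ℝ) ^ α * δ ≤ δ⁻¹ ^ α * δ := by
          gcongr
          exact Nat.floor_le (by positivity)
      _ = δ ^ (1 - α) := by
          rw [Real.inv_rpow hδ0.le, ← Real.rpow_neg hδ0.le, sub_eq_neg_add,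
            Real.rpow_add hδ0, Real.rpow_one]

lemma norm_sub_le_mul_abs_rpow_of_approx {E : Type*} [SeminormedAddCommGroup E] {Φ : ℝ → E}
    {P : ℕ → ℝ → E} {A B M α : ℝ} (hα0 : 0 ≤ α) (hα1 : α < 1) (hbdd : ∀ t, ‖Φ t‖ ≤ M)
    (happrox : ∀ N, 1 ≤ N → ∀ t, ‖Φ t - P N t‖ ≤ A * N ^ (α - 1))
    (hlip : ∀ N, 1 ≤ N → ∀ s t, ‖P N s - P N t‖ ≤ B * N ^ α * |s - t|) (s t : ℝ) :
    ‖Φ s - Φ t‖ ≤ (2 * M + 4 * A + B) * |s - t| ^ (1 - α) := by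
  have hM : 0 ≤ M := (norm_nonneg _).trans (hbdd 0)
  have hA : 0 ≤ A := by simpa using (norm_nonneg _).trans (happrox 1 le_rfl 0)
  have hB : 0 ≤ B := by simpa using (norm_nonneg _).trans (hlip 1 le_rfl 1 0)
  rcases (abs_nonneg (s - t)).eq_or_lt with hδ | hδ0
  · obtain rfl : s = t := sub_eq_zero.mp (abs_eq_zero.mp hδ.symm)
    simp only [sub_self, norm_zero]
    positivity
  rcases le_or_gt 1 |s - t| with hδ1 | hδ1
  · calc ‖Φ s - Φ t‖ ≤ M + M := norm_sub_le_of_le (hbdd s) (hbdd t)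
      _ ≤ (2 * M + 4 * A + B) * 1 := by linarith
      _ ≤ (2 * M + 4 * A + B) * |s - t| ^ (1 - α) := by
          gcongr
          exact Real.one_le_rpow hδ1 (by linarith)
  obtain ⟨N, hN, hNδ, hNαδ⟩ := exists_nat_rpow_le hδ0 hδ1 hα0 hα1.le
  calc ‖Φ s - Φ t‖ ≤ ‖Φ s - P N s‖ + ‖P N s - P N t‖ + ‖Φ t - P N t‖ := by
        have h1 := norm_sub_le_norm_sub_add_norm_sub (Φ s) (P N s) (Φ t)
        have h2 := norm_sub_le_norm_sub_add_norm_sub (P N s) (P N t) (Φ t)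
        rw [norm_sub_rev (P N t)] at h2
        linarith
    _ ≤ A * N ^ (α - 1) + B * (N ^ α * |s - t|) + A * N ^ (α - 1) := by
        rw [← mul_assoc]
        gcongr
        exacts [happrox N hN s, hlip N hN s t, happrox N hN t]
    _ ≤ A * (2 * |s - t| ^ (1 - α)) + B * |s - t| ^ (1 - α) + A * (2 * |s - t| ^ (1 - α)) := by
        gcongr
    _ ≤ (2 * M + 4 * A + B) * |s - t| ^ (1 - α) := by
        have : 0 ≤ M * |s - t| ^ (1 - α) := by positivity
        linarith

noncomputable def expSum (f : ℕ → ℂ) (N : ℕ) (t : ℝ) : ℂ :=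
  ∑ n ∈ Icc 1 N, f n * Complex.exp (2 * Real.pi * Complex.I * n * t)

noncomputable def fourierPartialSum (f : ℕ → ℂ) (N : ℕ) (t : ℝ) : ℂ :=
  ∑ n ∈ Icc 1 N, f n * Complex.exp (2 * Real.pi * Complex.I * n * t) / n

lemma hasDerivAt_fourierPartialSum (f : ℕ → ℂ) (N : ℕ) (t : ℝ) :
    HasDerivAt (fourierPartialSum f N) (2 * Real.pi * Complex.I * expSum f N t) t := by
  unfold fourierPartialSum expSum
  rw [mul_sum]
  refine HasDerivAt.fun_sum fun n hn ↦ ?_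
  have hn0 : (n : ℂ) ≠ 0 := Nat.cast_ne_zero.mpr (by grind)
  have h := (((hasDerivAt_id t).ofReal_comp.const_mul (2 * Real.pi * Complex.I * n)).cexp.const_mul
    (f n)).div_const n
  simp only [id, Complex.ofReal_one, mul_one] at h
  exact h.congr_deriv (by rw [div_eq_iff hn0]; ring)

lemma norm_fourierPartialSum_sub_le {f : ℕ → ℂ} {N : ℕ} {K : ℝ}
    (hS : ∀ t, ‖expSum f N t‖ ≤ K) (s t : ℝ) :
    ‖fourierPartialSum f N s - fourierPartialSum f N t‖ ≤ 2 * Real.pi * K * |s - t| := by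
  have hderiv : ∀ u, ‖2 * Real.pi * Complex.I * expSum f N u‖ ≤ 2 * Real.pi * K := fun u ↦
    calc ‖2 * Real.pi * Complex.I * expSum f N u‖ = 2 * Real.pi * ‖expSum f N u‖ := by
          simp [abs_of_pos Real.pi_pos]
      _ ≤ 2 * Real.pi * K := by gcongr; exact hS u
  simpa [Real.norm_eq_abs] using Convex.norm_image_sub_le_of_norm_hasDerivWithin_le
    (fun u _ ↦ (hasDerivAt_fourierPartialSum f N u).hasDerivWithinAt) (fun u _ ↦ hderiv u)
    convex_univ (Set.mem_univ t) (Set.mem_univ s)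

/-- If the exponential sums `S(x,t) = ∑_{1 ≤ n ≤ x} f(n) e^{2πint}` satisfy
`|S(x,t)| ≤ C x^α` uniformly, then `F(t) = ∑ f(n) e^{2πint}/n` converges and is Hölder
continuous with exponent `1 - α`, and likewise for `|F|`, `Re F`, `Im F`. -/
theorem stmt_0 (f : ℕ → ℂ) (C α : ℝ) (hC : 0 < C) (hα0 : 0 < α) (hα1 : α < 1)
    (hS : ∀ x : ℝ, 1 ≤ x → ∀ t : ℝ,
      ‖∑ n ∈ Finset.Icc 1 ⌊x⌋₊,
        f n * Complex.exp (2 * Real.pi * Complex.I * (n : ℂ) * (t : ℂ))‖ ≤ C * x ^ α) :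
    ∃ F : ℝ → ℂ,
      (∀ t : ℝ, Tendsto (fun N : ℕ => ∑ n ∈ Finset.Icc 1 N,
          f n * Complex.exp (2 * Real.pi * Complex.I * (n : ℂ) * (t : ℂ)) / (n : ℂ))
        atTop (𝓝 (F t))) ∧
      ∃ C₁ : ℝ, 0 < C₁ ∧
        (∀ s t : ℝ, ‖F s - F t‖ ≤ C₁ * |s - t| ^ (1 - α)) ∧
        (∀ s t : ℝ, |‖F s‖ - ‖F t‖| ≤ C₁ * |s - t| ^ (1 - α)) ∧
        (∀ s t : ℝ, |(F s).re - (F t).re| ≤ C₁ * |s - t| ^ (1 - α)) ∧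
        (∀ s t : ℝ, |(F s).im - (F t).im| ≤ C₁ * |s - t| ^ (1 - α)) := by
  have hSN : ∀ N : ℕ, 1 ≤ N → ∀ t, ‖expSum f N t‖ ≤ C * N ^ α := fun N hN t ↦ by
    simpa only [Nat.floor_natCast, expSum] using hS N (mod_cast hN) t
  set F : ℝ → ℂ := fun t ↦ limUnder atTop fun N ↦ fourierPartialSum f N t
  have hF (t : ℝ) : Tendsto (fourierPartialSum f · t) atTop (𝓝 (F t)) :=
    (cauchySeq_sum_div_natCast hα0.le hα1 fun N hN ↦ hSN N hN t).tendsto_limUnder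
  set A := (2 + 1 / (1 - α)) * C
  have happrox : ∀ N, 1 ≤ N → ∀ t, ‖F t - fourierPartialSum f N t‖ ≤ A * N ^ (α - 1) :=
    fun N hN t ↦ norm_sub_sum_div_natCast_le hα0.le hα1 (fun N hN ↦ hSN N hN t) (hF t) hN
  have hbdd (t : ℝ) : ‖F t‖ ≤ A + C := by
    have h1 : fourierPartialSum f 1 t = expSum f 1 t := by simp [fourierPartialSum, expSum]
    have h := add_le_add (happrox 1 le_rfl t) (hSN 1 le_rfl t)
    rw [← h1] at h
    simpa using (norm_le_norm_sub_add _ _).trans h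
  have hHolder := norm_sub_le_mul_abs_rpow_of_approx (B := 2 * Real.pi * C) hα0.le hα1 hbdd happrox
    fun N hN s t ↦ (norm_fourierPartialSum_sub_le (hSN N hN) s t).trans_eq (by ring)
  refine ⟨F, hF, _, by positivity, hHolder, fun s t ↦ ?_, fun s t ↦ ?_, fun s t ↦ ?_⟩
  · exact (abs_norm_sub_norm_le _ _).trans (hHolder s t)
  · exact (Complex.sub_re _ _ ▸ Complex.abs_re_le_norm (F s - F t)).trans (hHolder s t)
  · exact (Complex.sub_im _ _ ▸ Complex.abs_im_le_norm (F s - F t)).trans (hHolder s t)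
end

section
/- Let f : ℕ → ℂ be an arithmetic function and suppose there exist constants C > 0 and α ∈ (0,1) such that |S(x,t)| ≤ C·x^α for all real x ≥ 1 and all t ∈ ℝ. Then there exists a constant C' > 0 (depending only on C and α) such that for every t ∈ ℝ, every h > 0, and every positive integer N, |F_N(t+h) − F_N(t)| ≤ C'·h·N^{α}. -/
/-!
Write `F_N(t+h) - F_N(t) = ∑ w n * b n` with `b n = f n * e(n t)` and `w n = (e(n h) - 1) / n`.
The weights satisfy `‖w n‖ ≤ 2πh` and `‖w (m+1) - w m‖ ≤ 4πh / m`, so partial summation against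
`‖S(m, t)‖ ≤ C m^α` bounds the difference by `2πhC N^α + 4πhC ∑_{m<N} m^(α-1)`, and the last sum
is at most `N^α / α` by concavity of `x ↦ x^α`.
-/

open Finset

theorem sum_Icc_mul_eq_sub_sum_range {R : Type*} [Ring R] (w b : ℕ → R) (n : ℕ) :
    ∑ m ∈ Icc 1 n, w m * b m =
      w n * ∑ m ∈ Icc 1 n, b m - ∑ m ∈ range n, (w (m + 1) - w m) * ∑ j ∈ Icc 1 m, b j := by
  induction n with
  | zero => simp
  | succ n ih =>
    rw [sum_Icc_succ_top (by omega), sum_Icc_succ_top (by omega), sum_range_succ, ih]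
    noncomm_ring

theorem mul_rpow_sub_one_le_rpow_sub_rpow {α x : ℝ} (hα0 : 0 ≤ α) (hα1 : α ≤ 1) (hx : 1 ≤ x) :
    α * x ^ (α - 1) ≤ x ^ α - (x - 1) ^ α := by
  have hx0 : 0 < x := by linarith
  have hbernoulli : (1 + -x⁻¹) ^ α ≤ 1 + α * -x⁻¹ :=
    rpow_one_add_le_one_add_mul_self (by linarith [inv_le_one_of_one_le₀ hx]) hα0 hα1
  have hfactor : (x - 1) ^ α = x ^ α * (1 + -x⁻¹) ^ α := by
    rw [← Real.mul_rpow hx0.le (by linarith [inv_le_one_of_one_le₀ hx])]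
    congr 1
    field_simp
    ring
  rw [hfactor, Real.rpow_sub_one hx0.ne']
  calc α * (x ^ α / x) = x ^ α - x ^ α * (1 + α * -x⁻¹) := by ring
    _ ≤ x ^ α - x ^ α * (1 + -x⁻¹) ^ α := by gcongr

theorem sum_range_rpow_sub_one_le {α : ℝ} (hα0 : 0 < α) (hα1 : α < 1) (n : ℕ) :
    ∑ m ∈ range n, (m : ℝ) ^ (α - 1) ≤ (n : ℝ) ^ α / α := by
  have hsucc : ∀ k : ℕ, ∑ m ∈ range (k + 1), (m : ℝ) ^ (α - 1) ≤ (k : ℝ) ^ α / α := by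
    intro k
    induction k with
    | zero => simp [Real.zero_rpow (by linarith : α - 1 ≠ 0), Real.zero_rpow hα0.ne']
    | succ k ih =>
      have := mul_rpow_sub_one_le_rpow_sub_rpow hα0.le hα1.le
        (by simp : (1 : ℝ) ≤ ((k + 1 : ℕ) : ℝ))
      rw [sum_range_succ, le_div_iff₀ hα0]
      rw [le_div_iff₀ hα0] at ih
      push_cast at this ⊢
      simp only [add_sub_cancel_right] at this
      linarith
  rcases n with _ | k
  · simp [Real.zero_rpow hα0.ne']
  · refine (hsucc k).trans ?_
    gcongr
    simp

theorem norm_sum_Icc_mul_le_of_norm_partial_sum_le {R : Type*} [SeminormedRing R]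
    {w b : ℕ → R} {A D C α : ℝ} (n : ℕ) (hC : 0 ≤ C) (hα0 : 0 < α) (hα1 : α < 1)
    (hw : ‖w n‖ ≤ A) (hdw : ∀ m, 0 < m → ‖w (m + 1) - w m‖ ≤ D / m)
    (hb : ∀ m, ‖∑ j ∈ Icc 1 m, b j‖ ≤ C * (m : ℝ) ^ α) :
    ‖∑ m ∈ Icc 1 n, w m * b m‖ ≤ (A + D / α) * C * (n : ℝ) ^ α := by
  have hD : 0 ≤ D := by simpa using (norm_nonneg _).trans (hdw 1 one_pos)
  have hterm : ∀ m ∈ range n,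
      ‖(w (m + 1) - w m) * ∑ j ∈ Icc 1 m, b j‖ ≤ D * C * (m : ℝ) ^ (α - 1) := by
    intro m _
    rcases m.eq_zero_or_pos with rfl | hm
    · simp only [Order.lt_one_iff, Icc_eq_empty_of_lt, sum_empty, mul_zero, norm_zero]
      positivity
    have hm' : (0 : ℝ) < m := by exact_mod_cast hm
    calc ‖(w (m + 1) - w m) * ∑ j ∈ Icc 1 m, b j‖
        ≤ ‖w (m + 1) - w m‖ * ‖∑ j ∈ Icc 1 m, b j‖ := norm_mul_le _ _
      _ ≤ D / m * (C * (m : ℝ) ^ α) := by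
        gcongr
        · exact hdw m hm
        · exact hb m
      _ = D * C * (m : ℝ) ^ (α - 1) := by rw [Real.rpow_sub_one hm'.ne']; ring
  rw [sum_Icc_mul_eq_sub_sum_range]
  calc ‖w n * ∑ m ∈ Icc 1 n, b m - ∑ m ∈ range n, (w (m + 1) - w m) * ∑ j ∈ Icc 1 m, b j‖
      ≤ ‖w n‖ * ‖∑ m ∈ Icc 1 n, b m‖ + ∑ m ∈ range n, D * C * (m : ℝ) ^ (α - 1) :=
        (norm_sub_le _ _).trans (add_le_add (norm_mul_le _ _) ((norm_sum_le _ _).trans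
          (sum_le_sum hterm)))
    _ ≤ A * (C * (n : ℝ) ^ α) + D * C * ((n : ℝ) ^ α / α) := by
        rw [← mul_sum]
        gcongr
        · exact (norm_nonneg _).trans hw
        · exact hb n
        · exact sum_range_rpow_sub_one_le hα0 hα1 n
    _ = (A + D / α) * C * (n : ℝ) ^ α := by ring

theorem norm_cexp_mul_sub_one_div_le (θ : ℝ) (n : ℕ) :
    ‖(Complex.exp (Complex.I * (n * θ : ℝ)) - 1) / n‖ ≤ |θ| := by
  rcases n.eq_zero_or_pos with rfl | hn
  · simp
  have hn' : (0 : ℝ) < n := by exact_mod_cast hn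
  rw [norm_div, Complex.norm_natCast, div_le_iff₀ hn']
  calc _ ≤ ‖(n * θ : ℝ)‖ := Real.norm_exp_I_mul_ofReal_sub_one_le
    _ = |θ| * n := by rw [Real.norm_eq_abs, abs_mul, Nat.abs_cast, mul_comm]

theorem norm_cexp_mul_sub_one_div_sub_le (θ : ℝ) {m : ℕ} (hm : 0 < m) :
    ‖(Complex.exp (Complex.I * ((m + 1 : ℕ) * θ : ℝ)) - 1) / (m + 1 : ℕ) -
        (Complex.exp (Complex.I * (m * θ : ℝ)) - 1) / m‖ ≤ 2 * |θ| / m := by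
  set e : ℂ := Complex.exp (Complex.I * (m * θ : ℝ))
  have hm' : (0 : ℝ) < m := by exact_mod_cast hm
  have hstep :
      Complex.exp (Complex.I * ((m + 1 : ℕ) * θ : ℝ)) = e * Complex.exp (Complex.I * θ) := by
    rw [← Complex.exp_add]; push_cast; ring_nf
  have hsplit : (Complex.exp (Complex.I * ((m + 1 : ℕ) * θ : ℝ)) - 1) / (m + 1 : ℕ) -
        (e - 1) / m = (e * (Complex.exp (Complex.I * θ) - 1) - (e - 1) / m) / (m + 1 : ℕ) := by
    have : (m : ℂ) ≠ 0 := by exact_mod_cast hm.ne'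
    rw [hstep]; push_cast; field_simp; ring
  have he : ‖e‖ = 1 := Complex.norm_exp_I_mul_ofReal _
  have he1 : ‖(e - 1) / m‖ ≤ |θ| := norm_cexp_mul_sub_one_div_le θ m
  rw [hsplit, norm_div, Complex.norm_natCast, div_le_div_iff₀ (by positivity) hm']
  calc ‖e * (Complex.exp (Complex.I * θ) - 1) - (e - 1) / m‖ * m
      ≤ (|θ| + |θ|) * m := by
        gcongr
        refine (norm_sub_le _ _).trans (add_le_add ?_ he1)
        rw [norm_mul, he, one_mul, ← Real.norm_eq_abs]
        exact Real.norm_exp_I_mul_ofReal_sub_one_le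
    _ ≤ 2 * |θ| * ((m + 1 : ℕ) : ℝ) := by push_cast; nlinarith [abs_nonneg θ]

/-- Under the uniform exponential sum bound `|S(x,t)| ≤ C x^α`, the partial
sums satisfy `|F_N(t+h) − F_N(t)| ≤ C' h N^α` for all `t ∈ ℝ`, `h > 0`, and `N ≥ 1`. -/
theorem stmt_3 (f : ℕ → ℂ) (C α : ℝ) (hC : 0 < C) (hα0 : 0 < α) (hα1 : α < 1)
    (hS : ∀ x : ℝ, 1 ≤ x → ∀ t : ℝ,
      ‖∑ n ∈ Finset.Icc 1 ⌊x⌋₊,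
        f n * Complex.exp (2 * Real.pi * Complex.I * (n : ℂ) * (t : ℂ))‖ ≤ C * x ^ α) :
    ∃ C' : ℝ, 0 < C' ∧
      ∀ t h : ℝ, 0 < h → ∀ N : ℕ, 1 ≤ N →
        ‖(∑ n ∈ Finset.Icc 1 N,
              f n * Complex.exp (2 * Real.pi * Complex.I * (n : ℂ) * ((t + h : ℝ) : ℂ)) / (n : ℂ)) -
           (∑ n ∈ Finset.Icc 1 N,
              f n * Complex.exp (2 * Real.pi * Complex.I * (n : ℂ) * (t : ℂ)) / (n : ℂ))‖
          ≤ C' * h * (N : ℝ) ^ α := by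
  refine ⟨2 * Real.pi * C * (1 + 2 / α), by positivity, fun t h hh N _ => ?_⟩
  set θ := 2 * Real.pi * h
  set w : ℕ → ℂ := fun n => (Complex.exp (Complex.I * (n * θ : ℝ)) - 1) / n
  set b : ℕ → ℂ := fun n => f n * Complex.exp (2 * Real.pi * Complex.I * (n : ℂ) * (t : ℂ))
  have hb : ∀ m : ℕ, ‖∑ j ∈ Icc 1 m, b j‖ ≤ C * (m : ℝ) ^ α := by
    intro m
    rcases m.eq_zero_or_pos with rfl | hm
    · simp [Real.zero_rpow hα0.ne']
    simpa using hS m (by exact_mod_cast hm) t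
  have hdiff : ∀ n : ℕ,
      f n * Complex.exp (2 * Real.pi * Complex.I * (n : ℂ) * ((t + h : ℝ) : ℂ)) / (n : ℂ) -
        f n * Complex.exp (2 * Real.pi * Complex.I * (n : ℂ) * (t : ℂ)) / (n : ℂ) = w n * b n := by
    intro n
    have hshift : Complex.exp (2 * Real.pi * Complex.I * (n : ℂ) * ((t + h : ℝ) : ℂ)) =
        Complex.exp (2 * Real.pi * Complex.I * (n : ℂ) * (t : ℂ)) *
          Complex.exp (Complex.I * (n * θ : ℝ)) := by
      rw [← Complex.exp_add]; simp only [θ]; push_cast; ring_nf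
    simp only [w, b, hshift, div_eq_mul_inv]
    ring
  rw [← sum_sub_distrib, sum_congr rfl fun n _ => hdiff n]
  calc ‖∑ n ∈ Icc 1 N, w n * b n‖ ≤ (|θ| + 2 * |θ| / α) * C * (N : ℝ) ^ α :=
        norm_sum_Icc_mul_le_of_norm_partial_sum_le N hC.le hα0 hα1
          (norm_cexp_mul_sub_one_div_le θ N) (fun m hm => norm_cexp_mul_sub_one_div_sub_le θ hm) hb
    _ = 2 * Real.pi * C * (1 + 2 / α) * h * (N : ℝ) ^ α := by
        rw [abs_of_pos (by positivity)]; ring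
end

section
/- Let f : ℕ → ℂ be an arithmetic function, k a positive integer, and p > 0 a real number. Suppose there exist constants C > 0 and α with max(0, p−k) < α < p such that |S_k(x,t)| ≤ C·x^α for all real x ≥ 1 and all t ∈ ℝ. Then the series F_{k,p}(t) = Σ_{n=1}^∞ f(n)e^{2πi n^k t}/n^p converges for every t ∈ ℝ, and F_{k,p} is Hölder continuous with exponent (p−α)/k: there exists a constant C₂ > 0 such that |F_{k,p}(s) − F_{k,p}(t)| ≤ C₂·|s−t|^{(p−α)/k} for all s, t ∈ ℝ. Moreover, the same Hölder estimate holds for the real-valued functions t ↦ |F_{k,p}(t)|, t ↦ Re F_{k,p}(t), and t ↦ Im F_{k,p}(t). -/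
open Filter Finset Topology

/-!
Write `a n = f n * e(n^k t)`, so that the partial sums of `a` are `O(N^α)` uniformly in `t`.
Partial summation against `n^(-p)` bounds the tail of `F_{k,p}(t)` beyond `M` by `O(M^(α-p))`
uniformly in `t`, which gives convergence. For the partial sums `P_M`, since
`e(n^k s) = e(n^k t) e(n^k (s-t))`, partial summation against `(e(n^k u) - 1) n^(-p)`, whose
consecutive differences are `O(|u| n^(k-1-p))`, gives `‖P_M s - P_M t‖ = O(|s-t| M^(α+k-p))`.
Taking `M ≈ |s-t|^(-1/k)` balances the two errors at `|s-t|^((p-α)/k)`. The modulus, real and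
imaginary parts are `1`-Lipschitz functions of `F`.
-/

lemma one_add_mul_le_rpow_one_add_of_nonpos {s c : ℝ} (hs : 0 < 1 + s) (hc : c ≤ 0) :
    1 + c * s ≤ (1 + s) ^ c := by
  rw [Real.rpow_def_of_pos hs]
  nlinarith [Real.log_le_sub_one_of_pos hs, Real.add_one_le_exp (Real.log (1 + s) * c)]

lemma rpow_add_mul_rpow_sub_one_mul_le_rpow_add {x h c : ℝ} (hx : 0 < x) (hxh : 0 < x + h)
    (hc : c ≤ 0) : x ^ c + c * x ^ (c - 1) * h ≤ (x + h) ^ c := by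
  have hs : 0 < 1 + h / x := by rw [one_add_div hx.ne']; exact div_pos hxh hx
  calc x ^ c + c * x ^ (c - 1) * h = x ^ c * (1 + c * (h / x)) := by
        rw [Real.rpow_sub_one hx.ne']; ring
    _ ≤ x ^ c * (1 + h / x) ^ c :=
        mul_le_mul_of_nonneg_left (one_add_mul_le_rpow_one_add_of_nonpos hs hc)
          (Real.rpow_nonneg hx.le c)
    _ = (x + h) ^ c := by rw [← Real.mul_rpow hx.le hs.le]; congr 1; field_simp

lemma rpow_add_le_rpow_add_mul_rpow_sub_one_mul {x h c : ℝ} (hx : 0 < x) (hxh : 0 ≤ x + h)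
    (hc₀ : 0 ≤ c) (hc₁ : c ≤ 1) : (x + h) ^ c ≤ x ^ c + c * x ^ (c - 1) * h := by
  have hs : 0 ≤ 1 + h / x := by rw [one_add_div hx.ne']; exact div_nonneg hxh hx.le
  calc (x + h) ^ c = x ^ c * (1 + h / x) ^ c := by
        rw [← Real.mul_rpow hx.le hs]; congr 1; field_simp
    _ ≤ x ^ c * (1 + c * (h / x)) :=
        mul_le_mul_of_nonneg_left (rpow_one_add_le_one_add_mul_self (by linarith) hc₀ hc₁)
          (Real.rpow_nonneg hx.le c)
    _ = x ^ c + c * x ^ (c - 1) * h := by rw [Real.rpow_sub_one hx.ne']; ring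

lemma abs_rpow_sub_rpow_add_one_le {x c : ℝ} (hx : 0 < x) (hc : c ≤ 0) :
    |x ^ c - (x + 1) ^ c| ≤ -c * x ^ (c - 1) := by
  rw [abs_of_nonneg (sub_nonneg.mpr (Real.rpow_le_rpow_of_nonpos hx (by linarith) hc))]
  linarith [rpow_add_mul_rpow_sub_one_mul_le_rpow_add hx (by linarith : 0 < x + 1) hc]

lemma sum_Icc_rpow_sub_one_le {c : ℝ} (hc : 0 < c) (M : ℕ) :
    ∑ n ∈ Icc 1 M, (n : ℝ) ^ (c - 1) ≤ max 1 c⁻¹ * (M : ℝ) ^ c := by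
  rcases le_or_gt 1 c with hc₁ | hc₁
  · calc ∑ n ∈ Icc 1 M, (n : ℝ) ^ (c - 1) ≤ ∑ _n ∈ Icc 1 M, (M : ℝ) ^ (c - 1) :=
          sum_le_sum fun n hn => Real.rpow_le_rpow (Nat.cast_nonneg n)
            (by exact_mod_cast (mem_Icc.mp hn).2) (by linarith)
      _ = (M : ℝ) ^ c := by
          rw [sum_const, Nat.card_Icc, nsmul_eq_mul, add_tsub_cancel_right]
          rcases M.eq_zero_or_pos with rfl | hM
          · simp [Real.zero_rpow hc.ne']
          · rw [Real.rpow_sub_one (by positivity)]; field_simp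
      _ ≤ max 1 c⁻¹ * (M : ℝ) ^ c :=
          le_mul_of_one_le_left (Real.rpow_nonneg (Nat.cast_nonneg M) c) (le_max_left _ _)
  · -- `c * n ^ (c - 1) ≤ n ^ c - (n - 1) ^ c` by concavity, so the sum telescopes
    have key : ∀ M : ℕ, ∑ n ∈ Icc 1 M, (n : ℝ) ^ (c - 1) ≤ (M : ℝ) ^ c / c := by
      intro M
      induction M with
      | zero => simp [Real.zero_rpow hc.ne']
      | succ M ih =>
        rw [sum_Icc_succ_top (by omega)]
        have h := rpow_add_le_rpow_add_mul_rpow_sub_one_mul (x := (M : ℝ) + 1) (h := -1)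
          (by positivity) (by linarith [(M.cast_nonneg : (0 : ℝ) ≤ M)]) hc.le hc₁.le
        rw [add_neg_cancel_right] at h
        push_cast
        rw [le_div_iff₀ hc] at ih ⊢
        nlinarith
    calc ∑ n ∈ Icc 1 M, (n : ℝ) ^ (c - 1) ≤ (M : ℝ) ^ c / c := key M
      _ ≤ max 1 c⁻¹ * (M : ℝ) ^ c := by
          rw [div_eq_inv_mul]
          exact mul_le_mul_of_nonneg_right (le_max_right _ _) (by positivity)

lemma sum_Ioc_rpow_sub_one_le {c : ℝ} (hc : c < 0) {M : ℕ} (hM : 1 ≤ M) (N : ℕ) :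
    ∑ n ∈ Ioc M N, (n : ℝ) ^ (c - 1) ≤ (M : ℝ) ^ c / -c := by
  -- `-c * n ^ (c - 1) ≤ (n - 1) ^ c - n ^ c` by convexity, so the sum telescopes
  have key : ∀ N, M ≤ N → ∑ n ∈ Ioc M N, (n : ℝ) ^ (c - 1) ≤ ((M : ℝ) ^ c - (N : ℝ) ^ c) / -c := by
    intro N hMN
    induction N, hMN using Nat.le_induction with
    | base => simp
    | succ N hMN ih =>
      rw [sum_Ioc_succ_top hMN]
      have hN : (0 : ℝ) < N := by exact_mod_cast hM.trans hMN
      have h := rpow_add_mul_rpow_sub_one_mul_le_rpow_add (x := (N : ℝ) + 1) (h := -1)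
        (by positivity) (by linarith) hc.le
      rw [add_neg_cancel_right] at h
      push_cast
      rw [le_div_iff₀ (by linarith)] at ih ⊢
      nlinarith
  rcases le_or_gt M N with hMN | hNM
  · refine (key N hMN).trans (div_le_div_of_nonneg_right ?_ (by linarith))
    linarith [Real.rpow_nonneg (Nat.cast_nonneg N) c]
  · rw [Ioc_eq_empty (by omega), sum_empty]
    exact div_nonneg (Real.rpow_nonneg (Nat.cast_nonneg M) c) (by linarith)

lemma abs_pow_sub_add_one_pow_le {x : ℝ} (hx : 1 ≤ x) (k : ℕ) :
    |x ^ k - (x + 1) ^ k| ≤ k * 2 ^ (k - 1) * x ^ (k - 1) := by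
  calc |x ^ k - (x + 1) ^ k| ≤ |x - (x + 1)| * k * max |x| |x + 1| ^ (k - 1) :=
        abs_pow_sub_pow_le ..
    _ = k * (x + 1) ^ (k - 1) := by
        rw [abs_of_nonneg (by linarith : (0 : ℝ) ≤ x),
          abs_of_nonneg (by linarith : (0 : ℝ) ≤ x + 1), max_eq_right (by linarith)]
        norm_num
    _ ≤ k * (2 * x) ^ (k - 1) := by gcongr; linarith
    _ = k * 2 ^ (k - 1) * x ^ (k - 1) := by rw [mul_pow]; ring

lemma sum_Icc_mul_sub_sum_Icc_mul {R : Type*} [CommRing R] (a b : ℕ → R) {M N : ℕ} (h : M < N) :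
    ∑ n ∈ Icc 1 N, a n * b n - ∑ n ∈ Icc 1 M, a n * b n
      = (∑ i ∈ Icc 1 N, a i) * b N - (∑ i ∈ Icc 1 M, a i) * b (M + 1)
        + ∑ n ∈ Ico (M + 1) N, (∑ i ∈ Icc 1 n, a i) * (b n - b (n + 1)) := by
  induction N, Nat.succ_le_of_lt h using Nat.le_induction with
  | base => simp [sum_Icc_succ_top (Nat.le_add_left 1 M)]; ring
  | succ N hMN ih =>
    rw [sum_Icc_succ_top (by omega), sum_Icc_succ_top (by omega), sum_Ico_succ_top hMN]
    linear_combination ih hMN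

lemma norm_sum_Icc_mul_sub_sum_Icc_mul_le {R : Type*} [SeminormedCommRing R] {a b : ℕ → R}
    {B : ℕ → ℝ} (hB : ∀ n, ‖∑ i ∈ Icc 1 n, a i‖ ≤ B n) {M N : ℕ} (h : M < N) :
    ‖∑ n ∈ Icc 1 N, a n * b n - ∑ n ∈ Icc 1 M, a n * b n‖
      ≤ B N * ‖b N‖ + B M * ‖b (M + 1)‖ + ∑ n ∈ Ico (M + 1) N, B n * ‖b n - b (n + 1)‖ := by
  have hmul : ∀ n c, ‖(∑ i ∈ Icc 1 n, a i) * c‖ ≤ B n * ‖c‖ := fun n c =>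
    (norm_mul_le _ _).trans (mul_le_mul_of_nonneg_right (hB n) (norm_nonneg c))
  rw [sum_Icc_mul_sub_sum_Icc_mul a b h]
  exact (norm_add_le _ _).trans (add_le_add
    ((norm_sub_le _ _).trans (add_le_add (hmul _ _) (hmul _ _)))
    ((norm_sum_le _ _).trans (sum_le_sum fun n _ => hmul _ _)))

lemma norm_inv_ofReal_rpow {x : ℝ} (hx : 0 ≤ x) (p : ℝ) : ‖(((x ^ p : ℝ) : ℂ))⁻¹‖ = x ^ (-p) := by
  rw [norm_inv, Complex.norm_real, Real.norm_of_nonneg (Real.rpow_nonneg hx p), Real.rpow_neg hx]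

lemma norm_inv_ofReal_rpow_sub_le {x p : ℝ} (hx : 0 < x) (hp : 0 ≤ p) :
    ‖(((x ^ p : ℝ) : ℂ))⁻¹ - ((((x + 1) ^ p : ℝ) : ℂ))⁻¹‖ ≤ p * x ^ (-p - 1) := by
  rw [← Complex.ofReal_inv, ← Complex.ofReal_inv, ← Complex.ofReal_sub, Complex.norm_real,
    Real.norm_eq_abs, ← Real.rpow_neg hx.le, ← Real.rpow_neg (by linarith)]
  simpa using abs_rpow_sub_rpow_add_one_le hx (neg_nonpos.mpr hp)

lemma norm_exp_I_mul_ofReal_sub_exp_I_mul_ofReal_le (x y : ℝ) :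
    ‖Complex.exp (Complex.I * x) - Complex.exp (Complex.I * y)‖ ≤ |x - y| := by
  have h : Complex.exp (Complex.I * x) - Complex.exp (Complex.I * y)
      = Complex.exp (Complex.I * y) * (Complex.exp (Complex.I * ↑(x - y)) - 1) := by
    rw [mul_sub, ← Complex.exp_add]; push_cast; ring_nf
  rw [h, norm_mul, Complex.norm_exp_I_mul_ofReal, one_mul]
  exact Real.norm_exp_I_mul_ofReal_sub_one_le

noncomputable def phase (k n : ℕ) (t : ℝ) : ℂ :=
  Complex.exp (2 * Real.pi * Complex.I * ((n : ℂ) ^ k) * (t : ℂ))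

lemma phase_eq_exp_I_mul (k n : ℕ) (t : ℝ) :
    phase k n t = Complex.exp (Complex.I * ((2 * Real.pi * (n : ℝ) ^ k * t : ℝ) : ℂ)) := by
  unfold phase; push_cast; ring_nf

lemma phase_add (k n : ℕ) (s t : ℝ) : phase k n (s + t) = phase k n s * phase k n t := by
  unfold phase; rw [← Complex.exp_add]; push_cast; ring_nf

lemma phase_eq_mul_phase_sub (k n : ℕ) (s t : ℝ) :
    phase k n s = phase k n t * phase k n (s - t) := by
  rw [← phase_add, add_sub_cancel]

lemma norm_phase_sub_phase_le (k m n : ℕ) (u : ℝ) :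
    ‖phase k m u - phase k n u‖ ≤ 2 * Real.pi * |(m : ℝ) ^ k - (n : ℝ) ^ k| * |u| := by
  rw [phase_eq_exp_I_mul, phase_eq_exp_I_mul]
  refine (norm_exp_I_mul_ofReal_sub_exp_I_mul_ofReal_le _ _).trans_eq ?_
  rw [← sub_mul, ← mul_sub, abs_mul, abs_mul, abs_of_pos Real.two_pi_pos]

lemma norm_phase_sub_one_le (k n : ℕ) (u : ℝ) :
    ‖phase k n u - 1‖ ≤ 2 * Real.pi * (n : ℝ) ^ k * |u| := by
  rw [phase_eq_exp_I_mul]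
  refine Real.norm_exp_I_mul_ofReal_sub_one_le.trans_eq ?_
  rw [Real.norm_eq_abs, abs_mul, abs_of_nonneg (by positivity)]

lemma norm_phase_sub_one_div_sub_le {k : ℕ} (hk : 1 ≤ k) {p : ℝ} (hp : 0 ≤ p) (u : ℝ) {n : ℕ}
    (hn : 1 ≤ n) :
    ‖(phase k n u - 1) / (((n : ℝ) ^ p : ℝ) : ℂ)
        - (phase k (n + 1) u - 1) / ((((n + 1 : ℕ) : ℝ) ^ p : ℝ) : ℂ)‖
      ≤ 2 * Real.pi * (k * 2 ^ (k - 1) + p) * |u| * (n : ℝ) ^ ((k : ℝ) - 1 - p) := by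
  have hn₀ : (0 : ℝ) < n := by exact_mod_cast hn
  set b : ℕ → ℂ := fun n => (((n : ℝ) ^ p : ℝ) : ℂ)⁻¹ with hb
  have hsplit : (phase k n u - 1) / (((n : ℝ) ^ p : ℝ) : ℂ)
        - (phase k (n + 1) u - 1) / ((((n + 1 : ℕ) : ℝ) ^ p : ℝ) : ℂ)
      = (phase k n u - phase k (n + 1) u) * b (n + 1) + (phase k n u - 1) * (b n - b (n + 1)) := by
    simp only [hb]; ring
  have hb_succ : ‖b (n + 1)‖ ≤ (n : ℝ) ^ (-p) := by
    rw [hb, norm_inv_ofReal_rpow (Nat.cast_nonneg _)]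
    exact Real.rpow_le_rpow_of_nonpos hn₀ (by push_cast; linarith) (by linarith)
  have hb_sub : ‖b n - b (n + 1)‖ ≤ p * (n : ℝ) ^ (-p - 1) := by
    simpa [hb] using norm_inv_ofReal_rpow_sub_le hn₀ hp
  have hpow : |(n : ℝ) ^ k - ((n + 1 : ℕ) : ℝ) ^ k| ≤ k * 2 ^ (k - 1) * (n : ℝ) ^ (k - 1) := by
    push_cast; exact abs_pow_sub_add_one_pow_le (by exact_mod_cast hn) k
  have hexp₁ : (n : ℝ) ^ (k - 1) * (n : ℝ) ^ (-p) = (n : ℝ) ^ ((k : ℝ) - 1 - p) := by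
    rw [← Real.rpow_natCast, ← Real.rpow_add hn₀, Nat.cast_sub hk]; push_cast; ring_nf
  have hexp₂ : (n : ℝ) ^ k * (n : ℝ) ^ (-p - 1) = (n : ℝ) ^ ((k : ℝ) - 1 - p) := by
    rw [← Real.rpow_natCast, ← Real.rpow_add hn₀]; ring_nf
  have h₁ : ‖(phase k n u - phase k (n + 1) u) * b (n + 1)‖
      ≤ 2 * Real.pi * (k * 2 ^ (k - 1)) * |u| * (n : ℝ) ^ ((k : ℝ) - 1 - p) := by
    rw [norm_mul, ← hexp₁]
    calc _ ≤ (2 * Real.pi * (k * 2 ^ (k - 1) * (n : ℝ) ^ (k - 1)) * |u|) * (n : ℝ) ^ (-p) := by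
          gcongr
          exact (norm_phase_sub_phase_le k n (n + 1) u).trans (by gcongr)
      _ = _ := by ring
  have h₂ : ‖(phase k n u - 1) * (b n - b (n + 1))‖
      ≤ 2 * Real.pi * p * |u| * (n : ℝ) ^ ((k : ℝ) - 1 - p) := by
    rw [norm_mul, ← hexp₂]
    calc _ ≤ (2 * Real.pi * (n : ℝ) ^ k * |u|) * (p * (n : ℝ) ^ (-p - 1)) :=
          mul_le_mul (norm_phase_sub_one_le k n u) hb_sub (norm_nonneg _) (by positivity)
      _ = _ := by ring
  rw [hsplit]
  refine (norm_add_le _ _).trans ((add_le_add h₁ h₂).trans_eq ?_)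
  ring

section PartialSums

variable {a : ℕ → ℂ} {C α p : ℝ}

lemma norm_sum_Icc_div_rpow_sub_le (hC : 0 ≤ C) (hp : 0 ≤ p) (hαp : α < p)
    (hA : ∀ n : ℕ, ‖∑ i ∈ Icc 1 n, a i‖ ≤ C * (n : ℝ) ^ α) {M N : ℕ} (hM : 1 ≤ M)
    (hMN : M ≤ N) :
    ‖∑ n ∈ Icc 1 N, a n / (((n : ℝ) ^ p : ℝ) : ℂ) - ∑ n ∈ Icc 1 M, a n / (((n : ℝ) ^ p : ℝ) : ℂ)‖
      ≤ C * (2 + p / (p - α)) * (M : ℝ) ^ (α - p) := by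
  have hM₀ : (0 : ℝ) < M := by exact_mod_cast hM
  rcases hMN.eq_or_lt with rfl | hMN
  · rw [sub_self, norm_zero]; positivity
  have hN₀ : (0 : ℝ) < N := hM₀.trans (by exact_mod_cast hMN)
  simp only [div_eq_mul_inv]
  refine (norm_sum_Icc_mul_sub_sum_Icc_mul_le hA hMN).trans ?_
  have hN_term : C * (N : ℝ) ^ α * ‖(((N : ℝ) ^ p : ℝ) : ℂ)⁻¹‖ ≤ C * (M : ℝ) ^ (α - p) := by
    rw [norm_inv_ofReal_rpow hN₀.le, mul_assoc, ← Real.rpow_add hN₀, ← sub_eq_add_neg]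
    exact mul_le_mul_of_nonneg_left
      (Real.rpow_le_rpow_of_nonpos hM₀ (by exact_mod_cast hMN.le) (by linarith)) hC
  have hM_term :
      C * (M : ℝ) ^ α * ‖((((M + 1 : ℕ) : ℝ) ^ p : ℝ) : ℂ)⁻¹‖ ≤ C * (M : ℝ) ^ (α - p) := by
    rw [norm_inv_ofReal_rpow (Nat.cast_nonneg _), Real.rpow_sub hM₀, div_eq_mul_inv,
      ← Real.rpow_neg hM₀.le, ← mul_assoc]
    exact mul_le_mul_of_nonneg_left
      (Real.rpow_le_rpow_of_nonpos hM₀ (by push_cast; linarith) (by linarith)) (by positivity)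
  have hsum : ∑ n ∈ Ico (M + 1) N, C * (n : ℝ) ^ α
        * ‖(((n : ℝ) ^ p : ℝ) : ℂ)⁻¹ - ((((n + 1 : ℕ) : ℝ) ^ p : ℝ) : ℂ)⁻¹‖
      ≤ C * (p / (p - α)) * (M : ℝ) ^ (α - p) :=
    calc _ ≤ ∑ n ∈ Ioc M N, C * p * (n : ℝ) ^ ((α - p) - 1) := by
          refine sum_le_sum_of_subset_of_nonneg (fun n hn => ?_) (fun n _ _ => by positivity)
            |>.trans' (sum_le_sum fun n hn => ?_)
          · rw [mem_Ico] at hn; rw [mem_Ioc]; omega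
          · have hn₀ : (0 : ℝ) < n := Nat.cast_pos.mpr (by have := (mem_Ico.mp hn).1; omega)
            push_cast
            calc _ ≤ C * (n : ℝ) ^ α * (p * (n : ℝ) ^ (-p - 1)) := by
                  gcongr; exact norm_inv_ofReal_rpow_sub_le hn₀ hp
              _ = C * p * (n : ℝ) ^ ((α - p) - 1) := by
                rw [mul_mul_mul_comm, ← Real.rpow_add hn₀]; ring_nf
      _ = C * p * ∑ n ∈ Ioc M N, (n : ℝ) ^ ((α - p) - 1) := (mul_sum _ _ _).symm
      _ ≤ C * p * ((M : ℝ) ^ (α - p) / -(α - p)) := by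
          gcongr; exact sum_Ioc_rpow_sub_one_le (by linarith) hM N
      _ = C * (p / (p - α)) * (M : ℝ) ^ (α - p) := by rw [neg_sub]; ring
  exact (add_le_add (add_le_add hN_term hM_term) hsum).trans_eq (by ring)

lemma norm_sum_Icc_mul_phase_sub_one_div_le {k : ℕ} (hk : 1 ≤ k) (hC : 0 ≤ C) (hp : 0 ≤ p)
    (hα : 0 < α) (hkα : p - k < α) (hA : ∀ n : ℕ, ‖∑ i ∈ Icc 1 n, a i‖ ≤ C * (n : ℝ) ^ α)
    (u : ℝ) (M : ℕ) :
    ‖∑ n ∈ Icc 1 M, a n * ((phase k n u - 1) / (((n : ℝ) ^ p : ℝ) : ℂ))‖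
      ≤ C * (2 * Real.pi + 2 * Real.pi * (k * 2 ^ (k - 1) + p) * max 1 (α + k - p)⁻¹) * |u|
        * (M : ℝ) ^ (α + k - p) := by
  set c : ℕ → ℂ := fun n => (phase k n u - 1) / (((n : ℝ) ^ p : ℝ) : ℂ) with hc
  set K : ℝ := 2 * Real.pi * (k * 2 ^ (k - 1) + p)
  rcases M.eq_zero_or_pos with rfl | hM
  · simp [Real.zero_rpow (by linarith : α + k - p ≠ 0)]
  have hM₀ : (0 : ℝ) < M := by exact_mod_cast hM
  have habel := norm_sum_Icc_mul_sub_sum_Icc_mul_le (b := c) hA hM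
  rw [show ∑ n ∈ Icc 1 0, a n * c n = 0 by simp, sub_zero, Nat.cast_zero,
    Real.zero_rpow hα.ne', mul_zero, zero_mul, add_zero, zero_add] at habel
  refine habel.trans ?_
  have hM_term : C * (M : ℝ) ^ α * ‖c M‖ ≤ C * (2 * Real.pi) * |u| * (M : ℝ) ^ (α + k - p) := by
    simp only [hc, div_eq_mul_inv, norm_mul]
    rw [norm_inv_ofReal_rpow hM₀.le]
    calc _ ≤ C * (M : ℝ) ^ α * (2 * Real.pi * (M : ℝ) ^ k * |u| * (M : ℝ) ^ (-p)) := by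
          gcongr; exact norm_phase_sub_one_le k M u
      _ = C * (2 * Real.pi) * |u| * ((M : ℝ) ^ α * (M : ℝ) ^ (k : ℝ) * (M : ℝ) ^ (-p)) := by
          rw [Real.rpow_natCast]; ring
      _ = _ := by rw [← Real.rpow_add hM₀, ← Real.rpow_add hM₀]; ring_nf
  have hsum : ∑ n ∈ Ico 1 M, C * (n : ℝ) ^ α * ‖c n - c (n + 1)‖
      ≤ C * (K * max 1 (α + k - p)⁻¹) * |u| * (M : ℝ) ^ (α + k - p) :=
    calc _ ≤ ∑ n ∈ Icc 1 M, C * K * |u| * (n : ℝ) ^ ((α + k - p) - 1) := by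
          refine sum_le_sum_of_subset_of_nonneg Ico_subset_Icc_self (fun n _ _ => by positivity)
            |>.trans' (sum_le_sum fun n hn => ?_)
          have hn := (mem_Ico.mp hn).1
          have hn₀ : (0 : ℝ) < n := by exact_mod_cast hn
          calc _ ≤ C * (n : ℝ) ^ α * (K * |u| * (n : ℝ) ^ ((k : ℝ) - 1 - p)) := by
                gcongr; exact norm_phase_sub_one_div_sub_le hk hp u hn
            _ = C * K * |u| * ((n : ℝ) ^ α * (n : ℝ) ^ ((k : ℝ) - 1 - p)) := by ring
            _ = C * K * |u| * (n : ℝ) ^ ((α + k - p) - 1) := by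
                rw [← Real.rpow_add hn₀]; ring_nf
      _ = C * K * |u| * ∑ n ∈ Icc 1 M, (n : ℝ) ^ ((α + k - p) - 1) := (mul_sum _ _ _).symm
      _ ≤ C * K * |u| * (max 1 (α + k - p)⁻¹ * (M : ℝ) ^ (α + k - p)) := by
          gcongr; exact sum_Icc_rpow_sub_one_le (by linarith) M
      _ = _ := by ring
  exact (add_le_add hM_term hsum).trans_eq (by ring)

end PartialSums

lemma exists_tendsto_of_norm_sub_le {E : Type*} [SeminormedAddCommGroup E] [CompleteSpace E]
    {u : ℕ → E} {b : ℕ → ℝ} (hb : Tendsto b atTop (𝓝 0))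
    (hu : ∀ M N, 1 ≤ M → M ≤ N → ‖u N - u M‖ ≤ b M) :
    ∃ L, Tendsto u atTop (𝓝 L) ∧ ∀ M, 1 ≤ M → ‖L - u M‖ ≤ b M := by
  have hcauchy : CauchySeq u := by
    rw [Metric.cauchySeq_iff']
    intro ε hε
    obtain ⟨M, hMε, hM⟩ := ((hb.eventually (gt_mem_nhds hε)).and (eventually_ge_atTop 1)).exists
    exact ⟨M, fun N hN => by rw [dist_eq_norm]; exact (hu M N hM hN).trans_lt hMε⟩
  obtain ⟨L, hL⟩ := cauchySeq_tendsto_of_complete hcauchy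
  refine ⟨L, hL, fun M hM => le_of_tendsto (hL.sub_const (u M)).norm ?_⟩
  filter_upwards [eventually_ge_atTop M] with N hN using hu M N hM hN

lemma exists_nat_rpow_le_of_lt_one {δ κ r : ℝ} (hδ₀ : 0 < δ) (hδ₁ : δ < 1) (hκ : 0 < κ)
    (hr : 0 ≤ r) (hrκ : r ≤ κ) :
    ∃ M : ℕ, 1 ≤ M ∧ (M : ℝ) ^ (-r) ≤ 2 ^ r * δ ^ (r / κ)
      ∧ δ * (M : ℝ) ^ (κ - r) ≤ δ ^ (r / κ) := by
  set x := δ ^ (-κ⁻¹)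
  have hx : 1 < x := Real.one_lt_rpow_of_pos_of_lt_one_of_neg hδ₀ hδ₁ (by simpa using hκ)
  have hM : 1 ≤ ⌊x⌋₊ := Nat.le_floor (by exact_mod_cast hx.le)
  refine ⟨⌊x⌋₊, hM, ?_, ?_⟩
  · have hxM : x / 2 ≤ ⌊x⌋₊ := by
      have h₁ : (1 : ℝ) ≤ ⌊x⌋₊ := by exact_mod_cast hM
      linarith [Nat.lt_floor_add_one x]
    calc ((⌊x⌋₊ : ℕ) : ℝ) ^ (-r) ≤ (x / 2) ^ (-r) :=
          Real.rpow_le_rpow_of_nonpos (by positivity) hxM (by linarith)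
      _ = 2 ^ r * δ ^ (r / κ) := by
          rw [Real.div_rpow (by positivity) zero_le_two, Real.rpow_neg zero_le_two,
            ← Real.rpow_mul hδ₀.le, div_inv_eq_mul, mul_comm]
          congr 2
          field_simp
  · calc δ * ((⌊x⌋₊ : ℕ) : ℝ) ^ (κ - r) ≤ δ * x ^ (κ - r) :=
          mul_le_mul_of_nonneg_left (Real.rpow_le_rpow (Nat.cast_nonneg _)
            (Nat.floor_le (by positivity)) (by linarith)) hδ₀.le
      _ = δ ^ (r / κ) := by
          rw [← Real.rpow_mul hδ₀.le]
          conv_lhs => arg 1; rw [← Real.rpow_one δ]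
          rw [← Real.rpow_add hδ₀]
          congr 1
          field_simp
          ring

lemma exists_holder_of_approx {E : Type*} [SeminormedAddCommGroup E] {F : ℝ → E}
    {P : ℕ → ℝ → E} {κ r A B D : ℝ} (hκ : 0 < κ) (hr : 0 < r) (hrκ : r ≤ κ)
    (hF : ∀ t, ‖F t‖ ≤ D) (hFP : ∀ M t, 1 ≤ M → ‖F t - P M t‖ ≤ A * (M : ℝ) ^ (-r))
    (hP : ∀ M s t, 1 ≤ M → ‖P M s - P M t‖ ≤ B * |s - t| * (M : ℝ) ^ (κ - r)) :
    ∃ C₂, 0 < C₂ ∧ ∀ s t, ‖F s - F t‖ ≤ C₂ * |s - t| ^ (r / κ) := by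
  have hD : 0 ≤ D := (norm_nonneg _).trans (hF 0)
  have hA : 0 ≤ A := by simpa using (norm_nonneg _).trans (hFP 1 0 le_rfl)
  have hB : 0 ≤ B := by simpa using (norm_nonneg _).trans (hP 1 1 0 le_rfl)
  have hθ : 0 < r / κ := div_pos hr hκ
  refine ⟨2 * D + 2 * 2 ^ r * A + B + 1, by positivity, fun s t => ?_⟩
  have hδθ := Real.rpow_nonneg (abs_nonneg (s - t)) (r / κ)
  rcases (abs_nonneg (s - t)).eq_or_lt with hδ₀ | hδ₀
  · obtain rfl : s = t := sub_eq_zero.mp (abs_eq_zero.mp hδ₀.symm)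
    rw [sub_self, norm_zero]
    exact mul_nonneg (by positivity) hδθ
  rcases le_or_gt 1 |s - t| with hδ₁ | hδ₁
  · calc ‖F s - F t‖ ≤ 2 * D := (norm_sub_le _ _).trans (by linarith [hF s, hF t])
      _ ≤ 2 * D * |s - t| ^ (r / κ) :=
          le_mul_of_one_le_right (by positivity) (Real.one_le_rpow hδ₁ hθ.le)
      _ ≤ _ := by
          have : 0 ≤ 2 * 2 ^ r * A := by positivity
          gcongr; linarith
  · obtain ⟨M, hM, hMr, hMκ⟩ := exists_nat_rpow_le_of_lt_one hδ₀ hδ₁ hκ hr.le hrκ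
    calc ‖F s - F t‖ ≤ ‖F s - P M s‖ + ‖P M s - P M t‖ + ‖P M t - F t‖ :=
          (norm_sub_le_norm_sub_add_norm_sub _ (P M t) _).trans
            (add_le_add (norm_sub_le_norm_sub_add_norm_sub _ _ _) le_rfl)
      _ ≤ A * (M : ℝ) ^ (-r) + B * (|s - t| * (M : ℝ) ^ (κ - r)) + A * (M : ℝ) ^ (-r) := by
          rw [norm_sub_rev (P M t), ← mul_assoc]
          exact add_le_add (add_le_add (hFP M s hM) (hP M s t hM)) (hFP M t hM)
      _ ≤ A * (2 ^ r * |s - t| ^ (r / κ)) + B * |s - t| ^ (r / κ)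
            + A * (2 ^ r * |s - t| ^ (r / κ)) := by gcongr
      _ ≤ _ := by nlinarith

lemma sum_mul_phase_div_sub_sum_mul_phase_div (f : ℕ → ℂ) (k : ℕ) (p : ℝ) (M : ℕ) (s t : ℝ) :
    ∑ n ∈ Icc 1 M, f n * phase k n s / (((n : ℝ) ^ p : ℝ) : ℂ)
        - ∑ n ∈ Icc 1 M, f n * phase k n t / (((n : ℝ) ^ p : ℝ) : ℂ)
      = ∑ n ∈ Icc 1 M, f n * phase k n t * ((phase k n (s - t) - 1) / (((n : ℝ) ^ p : ℝ) : ℂ)) := by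
  rw [← sum_sub_distrib]
  refine sum_congr rfl fun n _ => ?_
  rw [phase_eq_mul_phase_sub k n s t]
  ring

/-- If `|S_k(x,t)| ≤ C x^α` uniformly with `max(0, p−k) < α < p`, then
`F_{k,p}(t) = ∑ f(n) e^{2πi n^k t}/n^p` converges and is Hölder continuous with exponent
`(p−α)/k`, and likewise for `|F_{k,p}|`, `Re F_{k,p}`, `Im F_{k,p}`. -/
theorem stmt_6 (f : ℕ → ℂ) (k : ℕ) (hk : 1 ≤ k) (p : ℝ) (hp : 0 < p)
    (C α : ℝ) (hC : 0 < C) (hα : max 0 (p - (k : ℝ)) < α) (hαp : α < p)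
    (hS : ∀ x : ℝ, 1 ≤ x → ∀ t : ℝ,
      ‖∑ n ∈ Finset.Icc 1 ⌊x⌋₊,
        f n * Complex.exp (2 * Real.pi * Complex.I * ((n : ℂ) ^ k) * (t : ℂ))‖ ≤ C * x ^ α) :
    ∃ F : ℝ → ℂ,
      (∀ t : ℝ, Tendsto (fun N : ℕ => ∑ n ∈ Finset.Icc 1 N,
          f n * Complex.exp (2 * Real.pi * Complex.I * ((n : ℂ) ^ k) * (t : ℂ))
            / (((n : ℝ) ^ p : ℝ) : ℂ))
        atTop (𝓝 (F t))) ∧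
      ∃ C₂ : ℝ, 0 < C₂ ∧
        (∀ s t : ℝ, ‖F s - F t‖ ≤ C₂ * |s - t| ^ ((p - α) / k)) ∧
        (∀ s t : ℝ, |‖F s‖ - ‖F t‖| ≤ C₂ * |s - t| ^ ((p - α) / k)) ∧
        (∀ s t : ℝ, |(F s).re - (F t).re| ≤ C₂ * |s - t| ^ ((p - α) / k)) ∧
        (∀ s t : ℝ, |(F s).im - (F t).im| ≤ C₂ * |s - t| ^ ((p - α) / k)) := by
  obtain ⟨hα₀, hkα⟩ := max_lt_iff.mp hα
  have hA : ∀ (t : ℝ) (n : ℕ), ‖∑ i ∈ Icc 1 n, f i * phase k i t‖ ≤ C * (n : ℝ) ^ α := by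
    intro t n
    rcases n.eq_zero_or_pos with rfl | hn
    · simp [Real.zero_rpow hα₀.ne']
    · simpa [phase] using hS n (by exact_mod_cast hn) t
  set P : ℕ → ℝ → ℂ := fun N t => ∑ n ∈ Icc 1 N, f n * phase k n t / (((n : ℝ) ^ p : ℝ) : ℂ)
  have hdecay : Tendsto (fun M : ℕ => C * (2 + p / (p - α)) * (M : ℝ) ^ (α - p)) atTop (𝓝 0) := by
    simpa using ((tendsto_rpow_neg_atTop (by linarith : 0 < p - α)).comp
      tendsto_natCast_atTop_atTop).const_mul (C * (2 + p / (p - α)))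
  choose F hF hFP using fun t => exists_tendsto_of_norm_sub_le (u := fun N => P N t) hdecay
    fun M N hM hMN => norm_sum_Icc_div_rpow_sub_le hC.le hp.le hαp (hA t) hM hMN
  have hF_bdd : ∀ t, ‖F t‖ ≤ C + C * (2 + p / (p - α)) := fun t => by
    have hP₁ : ‖P 1 t‖ ≤ C := by simpa [P] using hA t 1
    simpa using (norm_le_norm_add_norm_sub' (F t) (P 1 t)).trans (add_le_add hP₁ (hFP t 1 le_rfl))
  obtain ⟨C₂, hC₂, hF_holder⟩ := exists_holder_of_approx (κ := k) (r := p - α) (P := P)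
    (by linarith) (by linarith) (by linarith) hF_bdd
    (fun M t hM => by rw [neg_sub]; exact hFP t M hM)
    fun M s t _ => by
      rw [sub_sub_eq_add_sub, add_comm (k : ℝ), sum_mul_phase_div_sub_sum_mul_phase_div]
      exact norm_sum_Icc_mul_phase_sub_one_div_le hk hC.le hp.le hα₀ hkα (hA t) (s - t) M
  refine ⟨F, hF, C₂, hC₂, hF_holder, fun s t => ?_, fun s t => ?_, fun s t => ?_⟩
  · exact (abs_norm_sub_norm_le _ _).trans (hF_holder s t)
  · exact (Complex.sub_re _ _ ▸ Complex.abs_re_le_norm _).trans (hF_holder s t)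
  · exact (Complex.sub_im _ _ ▸ Complex.abs_im_le_norm _).trans (hF_holder s t)
end

section
/- Let f : ℕ → ℂ be an arithmetic function, k a positive integer, and p > 0 a real number. Suppose there exist constants C > 0 and α with max(0, p−k) < α < p such that |S_k(x,t)| ≤ C·x^α for all real x ≥ 1 and all t ∈ ℝ. Then for all real x ≥ 1 and all t ∈ ℝ, the twisted sum satisfies |Σ_{1 ≤ m ≤ x^{1/k}} m^{k−p} f(m) e^{2πi m^k t}| ≤ C̃·x^{(α+k−p)/k}, where C̃ = C·(1 + |k−p|/(α+k−p)). -/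
/-!
Write `A n = ∑_{m ≤ n} f(m) e(m^k t)`, so `|A n| ≤ C n^α`, and put `γ = k - p`, `β = γ + α > 0`.
Abel summation against the weights `m^γ` turns the twisted sum into
`N^γ A N - ∑_{n < N} ((n+1)^γ - n^γ) A n` with `N = ⌊x^{1/k}⌋`. Since
`(n+1)^γ - n^γ = γ ∫_n^{n+1} u^{γ-1} du` and `n^α ≤ u^α` on that interval,
`|(n+1)^γ - n^γ| n^α ≤ (|γ|/β)((n+1)^β - n^β)`, which telescopes to `(|γ|/β) N^β ≤ (|γ|/β) x^{β/k}`.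
-/

open Finset intervalIntegral

theorem sum_Icc_one_smul_eq_sub_sum_range {R M : Type*} [CommRing R] [AddCommGroup M] [Module R M]
    (w : ℕ → R) (a : ℕ → M) (N : ℕ) :
    ∑ m ∈ Icc 1 N, w m • a m =
      w N • ∑ m ∈ Icc 1 N, a m - ∑ n ∈ range N, (w (n + 1) - w n) • ∑ m ∈ Icc 1 n, a m := by
  induction N with
  | zero => simp
  | succ N ih =>
    rw [sum_Icc_succ_top (by omega), sum_Icc_succ_top (by omega), sum_range_succ, ih]
    module

theorem rpow_sub_rpow_eq_mul_integral {a b : ℝ} (ha : 0 < a) (hb : 0 < b) (γ : ℝ) :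
    b ^ γ - a ^ γ = γ * ∫ u in a..b, u ^ (γ - 1) := by
  rcases eq_or_ne γ 0 with rfl | hγ
  · simp
  rw [integral_rpow (Or.inr ⟨by simpa [sub_eq_iff_eq_add] using hγ, Set.notMem_uIcc_of_lt ha hb⟩)]
  rw [sub_add_cancel]
  field_simp

theorem abs_rpow_sub_rpow_mul_rpow_le {a b α γ : ℝ} (ha : 0 < a) (hab : a ≤ b) (hα : 0 ≤ α)
    (hβ : 0 < γ + α) :
    |b ^ γ - a ^ γ| * a ^ α ≤ |γ| / (γ + α) * (b ^ (γ + α) - a ^ (γ + α)) := by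
  have hb : 0 < b := ha.trans_le hab
  have hpos : ∀ u ∈ Set.Icc a b, 0 < u := fun u hu => ha.trans_le hu.1
  have hI : 0 ≤ ∫ u in a..b, u ^ (γ - 1) :=
    integral_nonneg hab fun u hu => Real.rpow_nonneg (hpos u hu).le _
  have hmono : (∫ u in a..b, u ^ (γ - 1)) * a ^ α ≤ ∫ u in a..b, u ^ (γ + α - 1) := by
    rw [← integral_mul_const]
    refine integral_mono_on hab
      ((intervalIntegrable_rpow (Or.inr (Set.notMem_uIcc_of_lt ha hb))).mul_const _)
      (intervalIntegrable_rpow (Or.inr (Set.notMem_uIcc_of_lt ha hb))) fun u hu => ?_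
    calc u ^ (γ - 1) * a ^ α ≤ u ^ (γ - 1) * u ^ α := by
          gcongr
          · exact Real.rpow_nonneg (hpos u hu).le _
          · exact hu.1
      _ = u ^ (γ + α - 1) := by rw [← Real.rpow_add (hpos u hu)]; ring_nf
  calc |b ^ γ - a ^ γ| * a ^ α = |γ| * ((∫ u in a..b, u ^ (γ - 1)) * a ^ α) := by
        rw [rpow_sub_rpow_eq_mul_integral ha hb, abs_mul, abs_of_nonneg hI]; ring
    _ ≤ |γ| * ∫ u in a..b, u ^ (γ + α - 1) := by gcongr
    _ = |γ| / (γ + α) * (b ^ (γ + α) - a ^ (γ + α)) := by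
        rw [rpow_sub_rpow_eq_mul_integral ha hb (γ + α)]; field_simp

section PartialSummation

variable {E : Type*} [SeminormedAddCommGroup E] {a : ℕ → E} {C α γ : ℝ}

theorem abs_rpow_succ_sub_mul_norm_sum_Icc_le (hC : 0 ≤ C) (hα : 0 ≤ α) (hβ : 0 < γ + α)
    (hA : ∀ n, 1 ≤ n → ‖∑ m ∈ Icc 1 n, a m‖ ≤ C * (n : ℝ) ^ α) (n : ℕ) :
    |((n + 1 : ℕ) : ℝ) ^ γ - (n : ℝ) ^ γ| * ‖∑ m ∈ Icc 1 n, a m‖ ≤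
      C * (|γ| / (γ + α)) * (((n + 1 : ℕ) : ℝ) ^ (γ + α) - (n : ℝ) ^ (γ + α)) := by
  rcases Nat.eq_zero_or_pos n with rfl | hn
  · have : 0 ≤ |γ| / (γ + α) := by positivity
    simpa [Real.zero_rpow hβ.ne'] using mul_nonneg hC this
  calc |((n + 1 : ℕ) : ℝ) ^ γ - (n : ℝ) ^ γ| * ‖∑ m ∈ Icc 1 n, a m‖
      ≤ |((n + 1 : ℕ) : ℝ) ^ γ - (n : ℝ) ^ γ| * (C * (n : ℝ) ^ α) := by
        gcongr
        exact hA n hn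
    _ = C * (|((n + 1 : ℕ) : ℝ) ^ γ - (n : ℝ) ^ γ| * (n : ℝ) ^ α) := by ring
    _ ≤ C * (|γ| / (γ + α) * (((n + 1 : ℕ) : ℝ) ^ (γ + α) - (n : ℝ) ^ (γ + α))) :=
        mul_le_mul_of_nonneg_left (abs_rpow_sub_rpow_mul_rpow_le (Nat.cast_pos.mpr hn)
          (Nat.cast_le.mpr (Nat.le_add_right n 1)) hα hβ) hC
    _ = _ := by ring

theorem norm_sum_Icc_rpow_smul_le [NormedSpace ℝ E] (hC : 0 ≤ C) (hα : 0 ≤ α) (hβ : 0 < γ + α)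
    (hA : ∀ n, 1 ≤ n → ‖∑ m ∈ Icc 1 n, a m‖ ≤ C * (n : ℝ) ^ α) (N : ℕ) :
    ‖∑ m ∈ Icc 1 N, (m : ℝ) ^ γ • a m‖ ≤ C * (1 + |γ| / (γ + α)) * (N : ℝ) ^ (γ + α) := by
  set β := γ + α
  have hlast : ‖(N : ℝ) ^ γ • ∑ m ∈ Icc 1 N, a m‖ ≤ C * (N : ℝ) ^ β := by
    rcases Nat.eq_zero_or_pos N with rfl | hN
    · simp [Real.zero_rpow hβ.ne']
    calc ‖(N : ℝ) ^ γ • ∑ m ∈ Icc 1 N, a m‖ ≤ (N : ℝ) ^ γ * (C * (N : ℝ) ^ α) := by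
          rw [norm_smul, Real.norm_of_nonneg (by positivity)]
          gcongr
          exact hA N hN
      _ = C * (N : ℝ) ^ β := by rw [Real.rpow_add (by positivity)]; ring
  calc ‖∑ m ∈ Icc 1 N, (m : ℝ) ^ γ • a m‖
      ≤ ‖(N : ℝ) ^ γ • ∑ m ∈ Icc 1 N, a m‖ + ∑ n ∈ range N,
          |((n + 1 : ℕ) : ℝ) ^ γ - (n : ℝ) ^ γ| * ‖∑ m ∈ Icc 1 n, a m‖ := by
        rw [sum_Icc_one_smul_eq_sub_sum_range]
        refine (norm_sub_le _ _).trans (add_le_add_right ((norm_sum_le _ _).trans_eq ?_) _)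
        simp only [norm_smul, Real.norm_eq_abs]
    _ ≤ C * (N : ℝ) ^ β + ∑ n ∈ range N, C * (|γ| / β) * (((n + 1 : ℕ) : ℝ) ^ β - (n : ℝ) ^ β) :=
        add_le_add hlast (sum_le_sum fun n _ => abs_rpow_succ_sub_mul_norm_sum_Icc_le hC hα hβ hA n)
    _ = C * (1 + |γ| / β) * (N : ℝ) ^ β := by
        rw [← mul_sum, sum_range_sub (fun n : ℕ => (n : ℝ) ^ β)]
        simp only [Nat.cast_zero, Real.zero_rpow hβ.ne']
        ring

end PartialSummation

theorem stmt_9_general (f : ℕ → ℂ) (k : ℕ) (p : ℝ)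
    (C α : ℝ) (hC : 0 < C) (hα : max 0 (p - (k : ℝ)) < α)
    (hS : ∀ x : ℝ, 1 ≤ x → ∀ t : ℝ,
      ‖∑ n ∈ Finset.Icc 1 ⌊x⌋₊,
        f n * Complex.exp (2 * Real.pi * Complex.I * ((n : ℂ) ^ k) * (t : ℂ))‖ ≤ C * x ^ α) :
    ∀ x : ℝ, 1 ≤ x → ∀ t : ℝ,
      ‖∑ m ∈ Finset.Icc 1 ⌊x ^ ((1 : ℝ) / k)⌋₊,
          (((m : ℝ) ^ ((k : ℝ) - p) : ℝ) : ℂ) * f m *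
            Complex.exp (2 * Real.pi * Complex.I * ((m : ℂ) ^ k) * (t : ℂ))‖
        ≤ C * (1 + |(k : ℝ) - p| / (α + k - p)) * x ^ ((α + k - p) / k) := by
  intro x hx t
  obtain ⟨hα0, hβ⟩ : 0 < α ∧ 0 < (k : ℝ) - p + α := by
    rw [max_lt_iff] at hα
    constructor <;> linarith
  have hfloor : (⌊x ^ ((1 : ℝ) / k)⌋₊ : ℝ) ^ ((k : ℝ) - p + α) ≤ x ^ ((α + k - p) / k) :=
    calc _ ≤ (x ^ ((1 : ℝ) / k)) ^ ((k : ℝ) - p + α) :=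
          Real.rpow_le_rpow (by positivity) (Nat.floor_le (by positivity)) hβ.le
      _ = x ^ ((α + k - p) / k) := by rw [← Real.rpow_mul (by linarith)]; ring_nf
  have hA (n : ℕ) (hn : 1 ≤ n) := by simpa using hS n (by exact_mod_cast hn) t
  calc _ = ‖∑ m ∈ Icc 1 ⌊x ^ ((1 : ℝ) / k)⌋₊, (m : ℝ) ^ ((k : ℝ) - p) •
        (f m * Complex.exp (2 * Real.pi * Complex.I * ((m : ℂ) ^ k) * (t : ℂ)))‖ := by
        simp only [Complex.real_smul, mul_assoc]
    _ ≤ C * (1 + |(k : ℝ) - p| / ((k : ℝ) - p + α)) *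
        (⌊x ^ ((1 : ℝ) / k)⌋₊ : ℝ) ^ ((k : ℝ) - p + α) :=
        norm_sum_Icc_rpow_smul_le hC.le hα0.le hβ hA _
    _ ≤ _ := by
        rw [show (k : ℝ) - p + α = α + k - p by ring] at hfloor hβ ⊢
        gcongr

/-- If `|S_k(x,t)| ≤ C x^α` uniformly with `max(0, p−k) < α < p`, then the
twisted sums satisfy `|∑_{1 ≤ m ≤ x^{1/k}} m^{k−p} f(m) e^{2πi m^k t}| ≤ C̃ x^{(α+k−p)/k}`
with `C̃ = C (1 + |k−p|/(α+k−p))`. -/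
theorem stmt_9 (f : ℕ → ℂ) (k : ℕ) (hk : 1 ≤ k) (p : ℝ) (hp : 0 < p)
    (C α : ℝ) (hC : 0 < C) (hα : max 0 (p - (k : ℝ)) < α) (hαp : α < p)
    (hS : ∀ x : ℝ, 1 ≤ x → ∀ t : ℝ,
      ‖∑ n ∈ Finset.Icc 1 ⌊x⌋₊,
        f n * Complex.exp (2 * Real.pi * Complex.I * ((n : ℂ) ^ k) * (t : ℂ))‖ ≤ C * x ^ α) :
    ∀ x : ℝ, 1 ≤ x → ∀ t : ℝ,
      ‖∑ m ∈ Finset.Icc 1 ⌊x ^ ((1 : ℝ) / k)⌋₊,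
          (((m : ℝ) ^ ((k : ℝ) - p) : ℝ) : ℂ) * f m *
            Complex.exp (2 * Real.pi * Complex.I * ((m : ℂ) ^ k) * (t : ℂ))‖
        ≤ C * (1 + |(k : ℝ) - p| / (α + k - p)) * x ^ ((α + k - p) / k) :=
  stmt_9_general f k p C α hC hα hS
end

section
/- Let a be a real number with 0 < a < 1, let b be an integer with b > 1/a, and let f : ℕ → ℂ be a bounded function. Then the series W_{a,b}(f;t) = Σ_{k=1}^∞ f(k)·a^k·e^{2πi b^k t} converges for every t ∈ ℝ, and W_{a,b}(f;·) is Hölder continuous with exponent −log a/log b: there exists a constant C₁ > 0 such that |W_{a,b}(f;s) − W_{a,b}(f;t)| ≤ C₁·|s−t|^{−log a/log b} for all s, t ∈ ℝ. Moreover, the same Hölder estimate holds for the real-valued functions t ↦ |W_{a,b}(f;t)|, t ↦ Re W_{a,b}(f;t), and t ↦ Im W_{a,b}(f;t). -/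
open Filter Finset Topology

/-!
The `k`-th term has modulus at most `B a^k`, so the series converges absolutely, and between
`s` and `t` it moves by at most `2πB a^k min(1, b^k h)` with `h = |s - t|`. For `h ≤ 1` pick `N`
with `b^N ≤ 1/h < b^(N+1)`: the terms with `k < N` form a geometric series of ratio `ab > 1`,
bounded by a multiple of its last term `h (ab)^N ≤ a^N`, and those with `k ≥ N` one of ratio `a`,
bounded by a multiple of `a^N`. Since `a = b^(-α)` with `α = -log a / log b`, the choice of `N`
gives `a^(N+1) ≤ h^α`. Modulus, real and imaginary part are `1`-Lipschitz.
-/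

theorem norm_exp_ofReal_mul_I_sub_exp_le (u v : ℝ) :
    ‖Complex.exp (u * Complex.I) - Complex.exp (v * Complex.I)‖ ≤ min 2 |u - v| := by
  refine le_min ?_ ?_
  · calc _ ≤ ‖Complex.exp (u * Complex.I)‖ + ‖Complex.exp (v * Complex.I)‖ := norm_sub_le _ _
      _ = 2 := by rw [Complex.norm_exp_ofReal_mul_I, Complex.norm_exp_ofReal_mul_I]; norm_num
  · have hfactor : Complex.exp (u * Complex.I) - Complex.exp (v * Complex.I)
        = Complex.exp (v * Complex.I) * (Complex.exp (Complex.I * ((u - v : ℝ) : ℂ)) - 1) := by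
      rw [mul_sub, mul_one, ← Complex.exp_add]; push_cast; ring_nf
    rw [hfactor, norm_mul, Complex.norm_exp_ofReal_mul_I, one_mul, ← Real.norm_eq_abs]
    exact Real.norm_exp_I_mul_ofReal_sub_one_le

section Lacunary

variable {a b h : ℝ}

theorem pow_le_rpow_of_inv_le_pow (ha0 : 0 < a) (ha1 : a ≤ 1) (hb1 : 1 < b) (hh : 0 < h)
    {n : ℕ} (hn : 1 / h ≤ b ^ n) : a ^ n ≤ h ^ (-Real.log a / Real.log b) := by
  have hb0 : 0 < b := one_pos.trans hb1
  have hlog : Real.logb b a ≤ 0 := Real.logb_nonpos hb1 ha0.le ha1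
  calc a ^ n = (b ^ n) ^ Real.logb b a := by
        conv_lhs => rw [← Real.rpow_logb hb0 hb1.ne' ha0]
        rw [← Real.rpow_mul_natCast hb0.le, mul_comm, Real.rpow_natCast_mul hb0.le]
    _ ≤ (1 / h) ^ Real.logb b a := Real.rpow_le_rpow_of_nonpos (by positivity) hn hlog
    _ = h ^ (-Real.log a / Real.log b) := by
        rw [one_div, Real.inv_rpow hh.le, ← Real.rpow_neg hh.le, Real.logb, neg_div]

theorem summable_pow_mul_min (ha0 : 0 ≤ a) (ha1 : a < 1) (hb0 : 0 ≤ b) (hh : 0 ≤ h) :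
    Summable fun k : ℕ => a ^ k * min 1 (b ^ k * h) :=
  (summable_geometric_of_lt_one ha0 ha1).of_nonneg_of_le
    (fun k => mul_nonneg (pow_nonneg ha0 k) (le_min zero_le_one (by positivity)))
    (fun k => mul_le_of_le_one_right (pow_nonneg ha0 k) (min_le_left _ _))

theorem tsum_pow_add_mul_min_le (ha0 : 0 ≤ a) (ha1 : a < 1) (hb0 : 0 ≤ b) (hh : 0 ≤ h)
    (N : ℕ) : ∑' k, a ^ (k + N) * min 1 (b ^ (k + N) * h) ≤ a ^ N / (1 - a) := by
  have hgeo := summable_geometric_of_lt_one ha0 ha1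
  calc ∑' k, a ^ (k + N) * min 1 (b ^ (k + N) * h) ≤ ∑' k, a ^ N * a ^ k := by
        refine (summable_nat_add_iff N |>.mpr (summable_pow_mul_min ha0 ha1 hb0 hh)).tsum_le_tsum
          (fun k => ?_) (hgeo.mul_left _)
        rw [← pow_add, add_comm N]
        exact mul_le_of_le_one_right (pow_nonneg ha0 _) (min_le_left _ _)
    _ = a ^ N / (1 - a) := by rw [tsum_mul_left, tsum_geometric_of_lt_one ha0 ha1, div_eq_mul_inv]

theorem sum_range_pow_mul_min_le (ha0 : 0 ≤ a) (hab : 1 < a * b) (hh : 0 ≤ h) (N : ℕ) :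
    ∑ k ∈ range N, a ^ k * min 1 (b ^ k * h) ≤ h * (a * b) ^ N / (a * b - 1) := by
  have hab' : 0 < a * b - 1 := by linarith
  calc ∑ k ∈ range N, a ^ k * min 1 (b ^ k * h) ≤ ∑ k ∈ range N, h * (a * b) ^ k := by
        refine sum_le_sum fun k _ => ?_
        calc a ^ k * min 1 (b ^ k * h) ≤ a ^ k * (b ^ k * h) :=
              mul_le_mul_of_nonneg_left (min_le_right _ _) (pow_nonneg ha0 k)
          _ = h * (a * b) ^ k := by ring
    _ = h * ((a * b) ^ N - 1) / (a * b - 1) := by rw [← mul_sum, geom_sum_eq hab.ne', mul_div]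
    _ ≤ h * (a * b) ^ N / (a * b - 1) := by gcongr; linarith

theorem exists_tsum_pow_mul_min_le (ha0 : 0 < a) (ha1 : a < 1) (hab : 1 < a * b) :
    ∃ K, 0 ≤ K ∧ ∀ h, 0 < h →
      ∑' k, a ^ k * min 1 (b ^ k * h) ≤ K * h ^ (-Real.log a / Real.log b) := by
  have hb1 : 1 < b := by nlinarith
  have hab' : 0 < a * b - 1 := by linarith
  have h1a : 0 < 1 - a := by linarith
  refine ⟨(1 / (a * b - 1) + 1 / (1 - a)) / a, by positivity, fun h hh => ?_⟩
  have hsum := summable_pow_mul_min (b := b) ha0.le ha1 (by linarith) hh.le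
  rcases le_or_gt h 1 with hh1 | hh1
  · obtain ⟨N, hN, hN1⟩ := exists_nat_pow_near (one_le_one_div hh hh1) hb1
    have hhead : h * (a * b) ^ N ≤ a ^ N := by
      rw [mul_pow, mul_left_comm]
      refine mul_le_of_le_one_right (pow_nonneg ha0.le N) ?_
      rwa [mul_comm, ← le_div_iff₀ hh]
    calc ∑' k, a ^ k * min 1 (b ^ k * h)
        = ∑ k ∈ range N, a ^ k * min 1 (b ^ k * h)
            + ∑' k, a ^ (k + N) * min 1 (b ^ (k + N) * h) := (hsum.sum_add_tsum_nat_add N).symm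
      _ ≤ h * (a * b) ^ N / (a * b - 1) + a ^ N / (1 - a) :=
          add_le_add (sum_range_pow_mul_min_le ha0.le hab hh.le N)
            (tsum_pow_add_mul_min_le ha0.le ha1 (by linarith) hh.le N)
      _ ≤ a ^ N / (a * b - 1) + a ^ N / (1 - a) := by gcongr
      _ = (1 / (a * b - 1) + 1 / (1 - a)) / a * a ^ (N + 1) := by
          field_simp; ring
      _ ≤ (1 / (a * b - 1) + 1 / (1 - a)) / a * h ^ (-Real.log a / Real.log b) := by
          gcongr
          exact pow_le_rpow_of_inv_le_pow ha0 ha1.le hb1 hh hN1.le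
  · have hα : 0 ≤ -Real.log a / Real.log b :=
      div_nonneg (neg_nonneg.mpr (Real.log_nonpos ha0.le ha1.le)) (Real.log_nonneg hb1.le)
    calc ∑' k, a ^ k * min 1 (b ^ k * h) ≤ 1 / (1 - a) := by
          simpa using tsum_pow_add_mul_min_le ha0.le ha1 (by linarith) hh.le 0
      _ ≤ (1 / (a * b - 1) + 1 / (1 - a)) / a := by
          rw [le_div_iff₀ ha0]
          nlinarith [one_div_pos.mpr hab', one_div_pos.mpr h1a]
      _ ≤ (1 / (a * b - 1) + 1 / (1 - a)) / a * h ^ (-Real.log a / Real.log b) :=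
          le_mul_of_one_le_right (by positivity) (Real.one_le_rpow hh1.le hα)

end Lacunary

noncomputable def weierstrassTerm (a b : ℝ) (f : ℕ → ℂ) (k : ℕ) (t : ℝ) : ℂ :=
  f k * (a : ℂ) ^ k * Complex.exp (2 * Real.pi * Complex.I * (b : ℂ) ^ k * t)

noncomputable def weierstrass (a b : ℝ) (f : ℕ → ℂ) (t : ℝ) : ℂ :=
  ∑' k, weierstrassTerm a b f (k + 1) t

section Weierstrass

variable {a b B : ℝ} {f : ℕ → ℂ}

theorem weierstrassTerm_eq (a b : ℝ) (f : ℕ → ℂ) (k : ℕ) (t : ℝ) :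
    weierstrassTerm a b f k t
      = f k * (a : ℂ) ^ k * Complex.exp (((2 * Real.pi * b ^ k * t : ℝ) : ℂ) * Complex.I) := by
  rw [weierstrassTerm]; push_cast; ring_nf

theorem norm_weierstrassTerm_le (hf : ∀ k, ‖f k‖ ≤ B) (ha0 : 0 ≤ a) (k : ℕ) (t : ℝ) :
    ‖weierstrassTerm a b f k t‖ ≤ B * a ^ k := by
  rw [weierstrassTerm_eq, norm_mul, Complex.norm_exp_ofReal_mul_I, mul_one, norm_mul, norm_pow,
    Complex.norm_real, Real.norm_of_nonneg ha0]
  exact mul_le_mul_of_nonneg_right (hf k) (pow_nonneg ha0 k)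

theorem norm_weierstrassTerm_sub_le (hf : ∀ k, ‖f k‖ ≤ B) (ha0 : 0 ≤ a) (hb0 : 0 ≤ b) (k : ℕ)
    (s t : ℝ) :
    ‖weierstrassTerm a b f k s - weierstrassTerm a b f k t‖
      ≤ 2 * Real.pi * B * (a ^ k * min 1 (b ^ k * |s - t|)) := by
  have hB : 0 ≤ B := (norm_nonneg _).trans (hf 0)
  have hexp := norm_exp_ofReal_mul_I_sub_exp_le (2 * Real.pi * b ^ k * s) (2 * Real.pi * b ^ k * t)
  rw [← mul_sub, abs_mul, abs_of_nonneg (by positivity)] at hexp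
  rw [weierstrassTerm_eq, weierstrassTerm_eq, ← mul_sub, norm_mul, norm_mul, norm_pow,
    Complex.norm_real, Real.norm_of_nonneg ha0]
  calc ‖f k‖ * a ^ k * ‖Complex.exp (((2 * Real.pi * b ^ k * s : ℝ) : ℂ) * Complex.I)
        - Complex.exp (((2 * Real.pi * b ^ k * t : ℝ) : ℂ) * Complex.I)‖
      ≤ B * a ^ k * min 2 (2 * Real.pi * b ^ k * |s - t|) := by gcongr; exact hf k
    _ ≤ B * a ^ k * (2 * Real.pi * min 1 (b ^ k * |s - t|)) := by
        gcongr B * a ^ k * ?_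
        rw [mul_min_of_nonneg _ _ (by positivity : (0 : ℝ) ≤ 2 * Real.pi), mul_one, ← mul_assoc]
        exact min_le_min (by linarith [Real.pi_gt_three]) le_rfl
    _ = 2 * Real.pi * B * (a ^ k * min 1 (b ^ k * |s - t|)) := by ring

theorem summable_weierstrassTerm (hf : ∀ k, ‖f k‖ ≤ B) (ha0 : 0 ≤ a) (ha1 : a < 1) (t : ℝ) :
    Summable fun k => weierstrassTerm a b f (k + 1) t :=
  .of_norm_bounded (((summable_geometric_of_lt_one ha0 ha1).mul_left (B * a)).congr
      fun k => by ring)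
    fun k => norm_weierstrassTerm_le hf ha0 (k + 1) t

theorem tendsto_sum_Icc_weierstrassTerm (hf : ∀ k, ‖f k‖ ≤ B) (ha0 : 0 ≤ a) (ha1 : a < 1)
    (t : ℝ) :
    Tendsto (fun N => ∑ k ∈ Icc 1 N, weierstrassTerm a b f k t) atTop
      (𝓝 (weierstrass a b f t)) := by
  refine (summable_weierstrassTerm hf ha0 ha1 t).hasSum.tendsto_sum_nat.congr fun N => ?_
  rw [← Ico_add_one_right_eq_Icc, sum_Ico_eq_sum_range, Nat.add_sub_cancel]
  exact sum_congr rfl fun k _ => by rw [add_comm]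

theorem exists_norm_weierstrass_sub_le (hf : ∀ k, ‖f k‖ ≤ B) (ha0 : 0 < a) (ha1 : a < 1)
    (hab : 1 < a * b) :
    ∃ C > 0, ∀ s t, ‖weierstrass a b f s - weierstrass a b f t‖
      ≤ C * |s - t| ^ (-Real.log a / Real.log b) := by
  obtain ⟨K, hK, hlacunary⟩ := exists_tsum_pow_mul_min_le ha0 ha1 hab
  have hB : 0 ≤ B := (norm_nonneg _).trans (hf 0)
  have hb0 : 0 ≤ b := by nlinarith
  refine ⟨2 * Real.pi * B * K + 1, by positivity, fun s t => ?_⟩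
  rcases eq_or_ne s t with rfl | hst
  · simp only [sub_self, norm_zero]; positivity
  have hh : 0 < |s - t| := abs_pos.mpr (sub_ne_zero.mpr hst)
  set u : ℕ → ℝ := fun k => a ^ k * min 1 (b ^ k * |s - t|)
  have hu : Summable u := summable_pow_mul_min ha0.le ha1 hb0 hh.le
  have hu0 : ∀ k, 0 ≤ u k := fun k =>
    mul_nonneg (by positivity) (le_min zero_le_one (by positivity))
  calc ‖weierstrass a b f s - weierstrass a b f t‖
      = ‖∑' k, (weierstrassTerm a b f (k + 1) s - weierstrassTerm a b f (k + 1) t)‖ := by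
        rw [weierstrass, weierstrass, (summable_weierstrassTerm hf ha0.le ha1 s).tsum_sub
          (summable_weierstrassTerm hf ha0.le ha1 t)]
    _ ≤ 2 * Real.pi * B * ∑' k, u (k + 1) :=
        tsum_of_norm_bounded (((summable_nat_add_iff 1).mpr hu).hasSum.mul_left _)
          fun k => norm_weierstrassTerm_sub_le hf ha0.le hb0 (k + 1) s t
    _ ≤ 2 * Real.pi * B * ∑' k, u k :=
        mul_le_mul_of_nonneg_left (tsum_comp_le_tsum_of_inj hu hu0 (add_left_injective 1))
          (by positivity)
    _ ≤ 2 * Real.pi * B * (K * |s - t| ^ (-Real.log a / Real.log b)) := by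
        gcongr
        exact hlacunary _ hh
    _ ≤ (2 * Real.pi * B * K + 1) * |s - t| ^ (-Real.log a / Real.log b) := by
        nlinarith [Real.rpow_nonneg hh.le (-Real.log a / Real.log b)]

end Weierstrass

/-- For `0 < a < 1`, an integer `b > 1/a`, and bounded `f : ℕ → ℂ`, the
generalized Weierstrass series `W_{a,b}(f;t) = ∑_{k≥1} f(k) a^k e^{2πi b^k t}` converges
and is Hölder continuous with exponent `−log a / log b`, and likewise for its absolute
value, real part, and imaginary part. -/
theorem stmt_10 (a : ℝ) (ha0 : 0 < a) (ha1 : a < 1) (b : ℤ) (hb : 1 / a < (b : ℝ))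
    (f : ℕ → ℂ) (B : ℝ) (hf : ∀ k : ℕ, ‖f k‖ ≤ B) :
    ∃ W : ℝ → ℂ,
      (∀ t : ℝ, Tendsto (fun N : ℕ => ∑ k ∈ Finset.Icc 1 N,
          f k * (a : ℂ) ^ k * Complex.exp (2 * Real.pi * Complex.I * ((b : ℂ) ^ k) * (t : ℂ)))
        atTop (𝓝 (W t))) ∧
      ∃ C₁ : ℝ, 0 < C₁ ∧
        (∀ s t : ℝ, ‖W s - W t‖
            ≤ C₁ * |s - t| ^ (-Real.log a / Real.log b)) ∧
        (∀ s t : ℝ, |‖W s‖ - ‖W t‖|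
            ≤ C₁ * |s - t| ^ (-Real.log a / Real.log b)) ∧
        (∀ s t : ℝ, |(W s).re - (W t).re|
            ≤ C₁ * |s - t| ^ (-Real.log a / Real.log b)) ∧
        (∀ s t : ℝ, |(W s).im - (W t).im|
            ≤ C₁ * |s - t| ^ (-Real.log a / Real.log b)) := by
  have hab : 1 < a * b := by rwa [div_lt_iff₀ ha0, mul_comm] at hb
  obtain ⟨C, hC, hW⟩ := exists_norm_weierstrass_sub_le hf ha0 ha1 hab
  refine ⟨weierstrass a b f, fun t => ?_, C, hC, hW,
    fun s t => (abs_norm_sub_norm_le _ _).trans (hW s t), fun s t => ?_, fun s t => ?_⟩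
  · convert tendsto_sum_Icc_weierstrassTerm (b := b) hf ha0.le ha1 t using 6
    rw [weierstrassTerm, Complex.ofReal_intCast]
  · rw [← Complex.sub_re]
    exact (Complex.abs_re_le_norm _).trans (hW s t)
  · rw [← Complex.sub_im]
    exact (Complex.abs_im_le_norm _).trans (hW s t)
end

section
/- Let a be a real number with 0 < a < 1, let b be an integer with b > 1/a, and let f : ℕ → ℂ be a bounded function. Then the Hausdorff dimensions of the graphs {(t, |W_{a,b}(f;t)|) : t ∈ [0,1]}, {(t, Re W_{a,b}(f;t)) : t ∈ [0,1]}, and {(t, Im W_{a,b}(f;t)) : t ∈ [0,1]} in ℝ² are each at most 2 + log a/log b. -/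
open Filter Finset Topology
open MeasureTheory ENNReal Metric

/-!
Box counting. If `|t - s| ≤ b⁻ⁿ` then `‖W t - W s‖ ≤ C aⁿ`: the first `n` terms of the series
move by at most `2π B (ab)ᵏ b⁻ⁿ` each, a geometric sum dominated by its last term `≈ aⁿ`, and
the tail moves by at most `2B ∑_{k>n} aᵏ ≈ aⁿ`. So above each of the `bⁿ` intervals of length
`b⁻ⁿ` in `[0, 1]` the graph of `‖W‖`, `Re W` or `Im W` lies in `O((ab)ⁿ)` squares of side `b⁻ⁿ`.
With `d = 2 + log a / log b` these `O(b²ⁿaⁿ) = O((b⁻ⁿ)⁻ᵈ)` squares keep the `d`-dimensional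
Hausdorff measure of the graph finite.
-/

theorem dimH_le_of_card_mul_rpow_le {X : Type*} [EMetricSpace X] {s : Set X} {d : ℝ}
    (hd : 0 ≤ d) {ι : ℕ → Type*} [∀ n, Fintype (ι n)] (t : ∀ n, ι n → Set X) {r : ℕ → ℝ}
    (hr : Tendsto r atTop (𝓝 0)) (hr0 : ∀ n, 0 ≤ r n)
    (hdiam : ∀ n i, ediam (t n i) ≤ ENNReal.ofReal (r n)) (hcover : ∀ n, s ⊆ ⋃ i, t n i)
    {M : ℝ} (hM : ∀ n, Fintype.card (ι n) * r n ^ d ≤ M) : dimH s ≤ ENNReal.ofReal d := by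
  borelize X
  have hsum (n : ℕ) : ∑ i, ediam (t n i) ^ d ≤ ENNReal.ofReal M := calc
    ∑ i, ediam (t n i) ^ d ≤ ∑ _i : ι n, ENNReal.ofReal (r n ^ d) :=
      sum_le_sum fun i _ => ofReal_rpow_of_nonneg (hr0 n) hd ▸ rpow_le_rpow (hdiam n i) hd
    _ = ENNReal.ofReal (Fintype.card (ι n) * r n ^ d) := by
      rw [sum_const, card_univ, nsmul_eq_mul, ENNReal.ofReal_mul (Nat.cast_nonneg _),
        ofReal_natCast]
    _ ≤ ENNReal.ofReal M := ofReal_le_ofReal (hM n)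
  have hμ : μH[d] s ≤ ENNReal.ofReal M :=
    (Measure.hausdorffMeasure_le_liminf_sum d s _ (ofReal_zero ▸ tendsto_ofReal hr) t
      (.of_forall hdiam) (.of_forall hcover)).trans <|
      (liminf_le_liminf (.of_forall hsum)).trans_eq (liminf_const _)
  have := dimH_le_of_hausdorffMeasure_ne_top (d := d.toNNReal)
    (by rw [Real.coe_toNNReal d hd]; exact ne_top_of_le_ne_top ofReal_ne_top hμ)
  exact this

def closedSquare (x y δ : ℝ) : Set (ℝ × ℝ) := Set.Icc x (x + δ) ×ˢ Set.Icc y (y + δ)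

theorem ediam_closedSquare_le (x y δ : ℝ) : ediam (closedSquare x y δ) ≤ ENNReal.ofReal δ := by
  refine ediam_le fun p hp q hq => ?_
  rw [Prod.edist_eq]
  refine max_le ?_ ?_
  · simpa using (edist_le_ediam_of_mem hp.1 hq.1).trans_eq (Real.ediam_Icc _ _)
  · simpa using (edist_le_ediam_of_mem hp.2 hq.2).trans_eq (Real.ediam_Icc _ _)

theorem exists_fin_mem_Icc_mul {K : ℕ} (hK : 0 < K) {δ x : ℝ} (hδ : 0 < δ) (hx0 : 0 ≤ x)
    (hxK : x ≤ K * δ) : ∃ i : Fin K, i * δ ≤ x ∧ x ≤ (i + 1) * δ := by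
  rcases hxK.lt_or_eq with hlt | rfl
  · have hfloor : ⌊x / δ⌋₊ < K := (Nat.floor_lt (by positivity)).2 ((div_lt_iff₀ hδ).2 hlt)
    refine ⟨⟨_, hfloor⟩, ?_, ?_⟩
    · exact (le_div_iff₀ hδ).1 (Nat.floor_le (by positivity))
    · exact (div_le_iff₀ hδ).1 (Nat.lt_floor_add_one _).le
  · refine ⟨⟨K - 1, by omega⟩, ?_, ?_⟩ <;>
      simp only [Nat.cast_sub (Nat.one_le_of_lt hK), Nat.cast_one, sub_add_cancel] <;>
      nlinarith

theorem graph_subset_iUnion_closedSquare (g : ℝ → ℝ) {N K : ℕ} (hN : 0 < N) (hK : 0 < K)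
    {ω : ℝ} (hg : ∀ t s, |t - s| ≤ (N : ℝ)⁻¹ → |g t - g s| ≤ ω) (hωK : 2 * ω ≤ K * (N : ℝ)⁻¹) :
    {q : ℝ × ℝ | q.1 ∈ Set.Icc 0 1 ∧ q.2 = g q.1} ⊆ ⋃ p : Fin N × Fin K,
      closedSquare (p.1 * (N : ℝ)⁻¹) (g (p.1 * (N : ℝ)⁻¹) - ω + p.2 * (N : ℝ)⁻¹) (N : ℝ)⁻¹ := by
  rintro ⟨t, y⟩ ⟨⟨ht0 : 0 ≤ t, ht1 : t ≤ 1⟩, rfl : y = g t⟩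
  have hδ : (0 : ℝ) < (N : ℝ)⁻¹ := by positivity
  obtain ⟨j, hjt, htj⟩ := exists_fin_mem_Icc_mul hN hδ ht0
    (by rwa [mul_inv_cancel₀ (by positivity)])
  have hosc := abs_le.1 (hg t (j * (N : ℝ)⁻¹) (abs_le.2 ⟨by linarith, by linarith⟩))
  obtain ⟨i, hiy, hyi⟩ := exists_fin_mem_Icc_mul hK hδ (x := g t - (g (j * (N : ℝ)⁻¹) - ω))
    (by linarith) (by linarith)
  exact Set.mem_iUnion.2 ⟨(j, i), ⟨hjt, by linarith⟩, by linarith, by linarith⟩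

theorem inv_pow_rpow_two_add_logb {m a : ℝ} (hm : 1 < m) (ha : 0 < a) (n : ℕ) :
    ((m ^ n)⁻¹) ^ (2 + Real.logb m a) = ((m ^ n)⁻¹) ^ 2 * (a ^ n)⁻¹ := by
  have hm0 : 0 < m := by linarith
  rw [Real.rpow_add (by positivity), Real.rpow_two, Real.inv_rpow (by positivity),
    ← Real.rpow_pow_comm hm0.le, Real.rpow_logb hm0 hm.ne' ha]

theorem dimH_graph_le_two_add_logb {a C : ℝ} {m : ℕ} (ha : 0 < a) (hm : 1 < m)
    (ham : 1 ≤ a * m) (g : ℝ → ℝ)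
    (hg : ∀ n : ℕ, ∀ t s, |t - s| ≤ ((m : ℝ) ^ n)⁻¹ → |g t - g s| ≤ C * a ^ n) :
    dimH {q : ℝ × ℝ | q.1 ∈ Set.Icc 0 1 ∧ q.2 = g q.1} ≤ ENNReal.ofReal (2 + Real.logb m a) := by
  have hm1 : (1 : ℝ) < m := by exact_mod_cast hm
  have hC : 0 ≤ C := by simpa using hg 0 0 0 (by simp)
  have hd : 0 ≤ 2 + Real.logb m a := by
    have : -1 ≤ Real.logb m a := (Real.le_logb_iff_rpow_le hm1 ha).2 <| by
      rw [Real.rpow_neg_one, inv_le_iff_one_le_mul₀' (by positivity), mul_comm]; exact ham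
    linarith
  -- `K n` squares of side `m⁻ⁿ` stacked vertically cover an interval of length `2 C aⁿ`.
  set K : ℕ → ℕ := fun n => ⌈2 * (C * a ^ n) * m ^ n⌉₊ + 1
  have hK (n : ℕ) : 2 * (C * a ^ n) * m ^ n ≤ K n := by
    simp only [K]; push_cast; linarith [Nat.le_ceil (2 * (C * a ^ n) * m ^ n)]
  refine dimH_le_of_card_mul_rpow_le hd (ι := fun n => Fin (m ^ n) × Fin (K n))
    (r := fun n => ((m : ℝ) ^ n)⁻¹)
    (fun n p => closedSquare (p.1 * ((m : ℝ) ^ n)⁻¹)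
      (g (p.1 * ((m : ℝ) ^ n)⁻¹) - C * a ^ n + p.2 * ((m : ℝ) ^ n)⁻¹) ((m : ℝ) ^ n)⁻¹)
    (tendsto_inv_atTop_zero.comp (tendsto_pow_atTop_atTop_of_one_lt hm1))
    (fun n => by positivity) (fun n p => ediam_closedSquare_le _ _ _) (fun n => ?_)
    (M := 2 * C + 2) (fun n => ?_)
  · have hcover := graph_subset_iUnion_closedSquare g (N := m ^ n) (K := K n) (by positivity)
      (Nat.succ_pos _) (ω := C * a ^ n) (by exact_mod_cast hg n)
      (by push_cast; rw [← div_eq_mul_inv, le_div_iff₀ (by positivity)]; exact hK n)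
    exact_mod_cast hcover
  · have hamn : 1 ≤ (a * m) ^ n := one_le_pow₀ ham
    have hKle : (K n : ℝ) ≤ 2 * C * (a * m) ^ n + 2 := by
      have := Nat.ceil_lt_add_one (show (0 : ℝ) ≤ 2 * (C * a ^ n) * m ^ n by positivity)
      simp only [K]; push_cast; rw [mul_pow]; linarith
    calc ((Fintype.card (Fin (m ^ n) × Fin (K n)) : ℕ) : ℝ)
          * (((m : ℝ) ^ n)⁻¹) ^ (2 + Real.logb m a)
        = K n / (a * m) ^ n := by
          rw [inv_pow_rpow_two_add_logb hm1 ha, Fintype.card_prod, Fintype.card_fin,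
            Fintype.card_fin]
          push_cast; field_simp; ring
      _ ≤ (2 * C * (a * m) ^ n + 2) / (a * m) ^ n := by gcongr
      _ = 2 * C + 2 / (a * m) ^ n := by field_simp
      _ ≤ 2 * C + 2 := by gcongr; exact div_le_self zero_le_two hamn

theorem norm_cexp_I_mul_sub_cexp_I_mul_le (θ φ : ℝ) :
    ‖Complex.exp (Complex.I * θ) - Complex.exp (Complex.I * φ)‖ ≤ |θ - φ| := by
  have hsplit : Complex.exp (Complex.I * θ) - Complex.exp (Complex.I * φ)
      = Complex.exp (Complex.I * φ) * (Complex.exp (Complex.I * ↑(θ - φ)) - 1) := by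
    rw [mul_sub, ← Complex.exp_add]; push_cast; ring_nf
  rw [hsplit, norm_mul, Complex.norm_exp_I_mul_ofReal, one_mul]
  exact Real.norm_exp_I_mul_ofReal_sub_one_le

theorem norm_cexp_two_pi_I_mul_sub_le_min {c : ℝ} (hc : 0 ≤ c) (t s : ℝ) :
    ‖Complex.exp (2 * Real.pi * Complex.I * c * t) - Complex.exp (2 * Real.pi * Complex.I * c * s)‖
      ≤ min (2 * Real.pi * c * |t - s|) 2 := by
  have hexp (x : ℝ) : 2 * Real.pi * Complex.I * c * x = Complex.I * ↑(2 * Real.pi * c * x) := by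
    push_cast; ring
  simp only [hexp]
  refine le_min ((norm_cexp_I_mul_sub_cexp_I_mul_le _ _).trans_eq ?_) ?_
  · rw [← mul_sub, abs_mul, abs_of_nonneg (by positivity)]
  · refine (norm_sub_le _ _).trans ?_
    simp only [Complex.norm_exp_I_mul_ofReal]; norm_num

theorem geom_sum_range_le_of_one_lt {r : ℝ} (hr : 1 < r) (n : ℕ) :
    ∑ i ∈ range n, r ^ i ≤ r ^ n / (r - 1) := by
  rw [geom_sum_eq hr.ne']
  exact div_le_div_of_nonneg_right (by linarith) (by linarith)

noncomputable def weierstrassPartialSum (a b : ℝ) (f : ℕ → ℂ) (N : ℕ) (t : ℝ) : ℂ :=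
  ∑ k ∈ Icc 1 N,
    f k * (a : ℂ) ^ k * Complex.exp (2 * Real.pi * Complex.I * ((b : ℂ) ^ k) * (t : ℂ))

theorem norm_weierstrassPartialSum_sub_le {a b B : ℝ} (ha0 : 0 < a) (ha1 : a < 1)
    (hab : 1 < a * b) {f : ℕ → ℂ} (hf : ∀ k, ‖f k‖ ≤ B) (N n : ℕ) {t s : ℝ}
    (hts : |t - s| ≤ (b ^ n)⁻¹) :
    ‖weierstrassPartialSum a b f N t - weierstrassPartialSum a b f N s‖
      ≤ (2 * Real.pi * B * (a * b) / (a * b - 1) + 2 * B * a / (1 - a)) * a ^ n := by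
  have hb : 0 < b := pos_of_mul_pos_right (by linarith) ha0.le
  have hB : 0 ≤ B := (norm_nonneg _).trans (hf 0)
  set u : ℕ → ℝ := fun k => B * a ^ k * min (2 * Real.pi * b ^ k * (b ^ n)⁻¹) 2
  have hu (k : ℕ) : 0 ≤ u k := by positivity
  have hterm (k : ℕ) : ‖f k * (a : ℂ) ^ k *
      (Complex.exp (2 * Real.pi * Complex.I * ((b : ℂ) ^ k) * (t : ℂ)) -
        Complex.exp (2 * Real.pi * Complex.I * ((b : ℂ) ^ k) * (s : ℂ)))‖ ≤ u k := by
    simp only [← Complex.ofReal_pow, norm_mul, Complex.norm_real,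
      Real.norm_of_nonneg (pow_nonneg ha0.le k)]
    refine mul_le_mul (by gcongr; exact hf k)
      ((norm_cexp_two_pi_I_mul_sub_le_min (by positivity) t s).trans (by gcongr))
      (norm_nonneg _) (by positivity)
  calc ‖weierstrassPartialSum a b f N t - weierstrassPartialSum a b f N s‖
      ≤ ∑ k ∈ Icc 1 N, u k := by
        rw [weierstrassPartialSum, weierstrassPartialSum, ← sum_sub_distrib]
        refine (norm_sum_le _ _).trans (sum_le_sum fun k _ => ?_)
        rw [← mul_sub]; exact hterm k
    _ ≤ ∑ k ∈ range (n + 1) ∪ Ico (n + 1) (N + 1), u k :=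
        sum_le_sum_of_subset_of_nonneg
          (fun k => by simp only [mem_Icc, mem_union, mem_range, mem_Ico]; omega)
          (fun k _ _ => hu k)
    _ = ∑ k ∈ range (n + 1), u k + ∑ k ∈ Ico (n + 1) (N + 1), u k :=
        sum_union (by rw [range_eq_Ico]; exact Ico_disjoint_Ico_consecutive _ _ _)
    _ ≤ ∑ k ∈ range (n + 1), 2 * Real.pi * B * (b ^ n)⁻¹ * (a * b) ^ k
          + ∑ k ∈ Ico (n + 1) (N + 1), 2 * B * a ^ k := by
        gcongr with k _ k _
        · exact (mul_le_mul_of_nonneg_left (min_le_left _ _) (by positivity)).trans_eq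
            (by rw [mul_pow]; ring)
        · exact (mul_le_mul_of_nonneg_left (min_le_right _ _) (by positivity)).trans_eq
            (by ring)
    _ ≤ 2 * Real.pi * B * (b ^ n)⁻¹ * ((a * b) ^ (n + 1) / (a * b - 1))
          + 2 * B * (a ^ (n + 1) / (1 - a)) := by
        rw [← mul_sum, ← mul_sum]
        gcongr
        · exact geom_sum_range_le_of_one_lt hab _
        · exact geom_sum_Ico_le_of_lt_one ha0.le ha1
    _ = _ := by
        have : a * b - 1 ≠ 0 := by linarith
        have : 1 - a ≠ 0 := by linarith
        field_simp; ring

theorem norm_sub_le_of_tendsto_weierstrassPartialSum {a b B : ℝ} (ha0 : 0 < a) (ha1 : a < 1)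
    (hab : 1 < a * b) {f : ℕ → ℂ} (hf : ∀ k, ‖f k‖ ≤ B) {W : ℝ → ℂ}
    (hW : ∀ t, Tendsto (fun N => weierstrassPartialSum a b f N t) atTop (𝓝 (W t))) (n : ℕ)
    {t s : ℝ} (hts : |t - s| ≤ (b ^ n)⁻¹) :
    ‖W t - W s‖ ≤ (2 * Real.pi * B * (a * b) / (a * b - 1) + 2 * B * a / (1 - a)) * a ^ n :=
  le_of_tendsto' ((hW t).sub (hW s)).norm fun N =>
    norm_weierstrassPartialSum_sub_le ha0 ha1 hab hf N n hts

/-- For `0 < a < 1`, an integer `b > 1/a`, and bounded `f : ℕ → ℂ`, the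
Hausdorff dimensions of the graphs of `|W_{a,b}(f;·)|`, `Re W_{a,b}(f;·)`,
`Im W_{a,b}(f;·)` over `[0,1]` are each at most `2 + log a / log b`. -/
theorem stmt_11 (a : ℝ) (ha0 : 0 < a) (ha1 : a < 1) (b : ℤ) (hb : 1 / a < (b : ℝ))
    (f : ℕ → ℂ) (B : ℝ) (hf : ∀ k : ℕ, ‖f k‖ ≤ B)
    (W : ℝ → ℂ)
    (hW : ∀ t : ℝ, Tendsto (fun N : ℕ => ∑ k ∈ Finset.Icc 1 N,
        f k * (a : ℂ) ^ k * Complex.exp (2 * Real.pi * Complex.I * ((b : ℂ) ^ k) * (t : ℂ)))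
      atTop (𝓝 (W t))) :
    dimH {q : ℝ × ℝ | q.1 ∈ Set.Icc (0 : ℝ) 1 ∧ q.2 = ‖W q.1‖}
        ≤ ENNReal.ofReal (2 + Real.log a / Real.log b) ∧
    dimH {q : ℝ × ℝ | q.1 ∈ Set.Icc (0 : ℝ) 1 ∧ q.2 = (W q.1).re}
        ≤ ENNReal.ofReal (2 + Real.log a / Real.log b) ∧
    dimH {q : ℝ × ℝ | q.1 ∈ Set.Icc (0 : ℝ) 1 ∧ q.2 = (W q.1).im}
        ≤ ENNReal.ofReal (2 + Real.log a / Real.log b) := by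
  have hab : 1 < a * b := by rwa [div_lt_iff₀ ha0, mul_comm] at hb
  have hb1 : (1 : ℝ) < b := by nlinarith
  lift b to ℕ using by exact_mod_cast hb1.le.trans' zero_le_one
  push_cast at hab hb1 hW ⊢
  have hosc (n : ℕ) (t s : ℝ) (hts : |t - s| ≤ ((b : ℝ) ^ n)⁻¹) :=
    norm_sub_le_of_tendsto_weierstrassPartialSum ha0 ha1 hab hf
      (fun t => by simpa [weierstrassPartialSum] using hW t) n hts
  have hgraph (φ : ℂ → ℝ) (hφ : ∀ z w, |φ z - φ w| ≤ ‖z - w‖) :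
      dimH {q : ℝ × ℝ | q.1 ∈ Set.Icc 0 1 ∧ q.2 = φ (W q.1)}
        ≤ ENNReal.ofReal (2 + Real.log a / Real.log b) := by
    rw [Real.log_div_log]
    exact dimH_graph_le_two_add_logb ha0 (by exact_mod_cast hb1) hab.le _
      fun n t s hts => (hφ _ _).trans (hosc n t s hts)
  refine ⟨hgraph _ abs_norm_sub_norm_le, hgraph Complex.re fun z w => ?_,
    hgraph Complex.im fun z w => ?_⟩
  · simpa using Complex.abs_re_le_norm (z - w)
  · simpa using Complex.abs_im_le_norm (z - w)
end
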